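/- arXiv:1407.5929 — 6 statements merged into one kernel-verified Lean document; each statement's English description precedes it below -/
import Mathlib

section
/- Let n ≥ 2 and let Ω ⊆ ℝⁿ be a bounded domain. For every ε > 0 there exists δ > 0 such that any pair of points x₁, x₂ ∈ Ω with dist(xᵢ, ∂Ω) ≥ ε (equivalently, dist(xᵢ, Ωᶜ) ≥ ε) are joined by a δ-tube, i.e. there is a continuous path ξ:[0,1]→Ω with ξ(0)=x₁, ξ(1)=x₂ and the closed ball of radius δ around ξ(t) contained in Ω for all t ∈ [0,1]. -/
open MeasureTheory Matrix Pointwise ENNReal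

noncomputable section

namespace Incompat

/-- The rotation group `SO(n)` as a set of `n × n` real matrices. -/
def SO (n : ℕ) : Set (Matrix (Fin n) (Fin n) ℝ) :=
  {Q | Qᵀ * Q = 1 ∧ Q.det = 1}

/-- The image of a set `S ⊆ ℝⁿ` under the rigid motion `x ↦ ξ + Q x`. -/
def rigidImage {n : ℕ} (ξ : EuclideanSpace ℝ (Fin n)) (Q : Matrix (Fin n) (Fin n) ℝ)
    (S : Set (EuclideanSpace ℝ (Fin n))) : Set (EuclideanSpace ℝ (Fin n)) :=
  (fun x => ξ + Matrix.toEuclideanLin Q x) '' S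

/-- `C₁`, `C₂` are congruently connected in `Ω` as rigid copies of `C`. -/
def CongrConn {n : ℕ} (Ω C C₁ C₂ : Set (EuclideanSpace ℝ (Fin n))) : Prop :=
  ∃ ξ : ℝ → EuclideanSpace ℝ (Fin n), ∃ Q : ℝ → Matrix (Fin n) (Fin n) ℝ,
    ContinuousOn ξ (Set.Icc 0 1) ∧ ContinuousOn Q (Set.Icc 0 1) ∧
    (∀ t ∈ Set.Icc (0:ℝ) 1, Q t ∈ SO n) ∧
    C₁ = rigidImage (ξ 0) (Q 0) C ∧ C₂ = rigidImage (ξ 1) (Q 1) C ∧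
    ∀ t ∈ Set.Icc (0:ℝ) 1, rigidImage (ξ t) (Q t) C ⊆ Ω

/-- `Ω` is `C`-filled: every point of `Ω` lies in a subset of `Ω` directly congruent to `C`. -/
def IsCFilled {n : ℕ} (Ω C : Set (EuclideanSpace ℝ (Fin n))) : Prop :=
  ∀ x ∈ Ω, ∃ ξ Q, Q ∈ SO n ∧ x ∈ rigidImage ξ Q C ∧ rigidImage ξ Q C ⊆ Ω

/-- `Ω` is `C`-connected: some family of pairwise congruently connected rigid copies of `C`
inside `Ω` (an equivalence class of `∼`) covers `Ω`. -/
def IsCConnected {n : ℕ} (Ω C : Set (EuclideanSpace ℝ (Fin n))) : Prop :=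
  ∃ 𝒞 : Set (Set (EuclideanSpace ℝ (Fin n))),
    (∀ D ∈ 𝒞, D ⊆ Ω) ∧
    (∀ D₁ ∈ 𝒞, ∀ D₂ ∈ 𝒞, CongrConn Ω C D₁ D₂) ∧
    Ω ⊆ ⋃₀ 𝒞

/-- The Frobenius norm of a matrix. -/
def frobNorm {m n : ℕ} (A : Matrix (Fin m) (Fin n) ℝ) : ℝ :=
  Real.sqrt (∑ i, ∑ j, (A i j) ^ 2)

/-- `N_ε(K)`: the closed `ε`-neighbourhood of `K` in the Frobenius norm. -/
def Nbhd {m n : ℕ} (K : Set (Matrix (Fin m) (Fin n) ℝ)) (ε : ℝ) :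
    Set (Matrix (Fin m) (Fin n) ℝ) :=
  {A | ∃ B ∈ K, frobNorm (A - B) ≤ ε}

/-- The (a.e.-defined) gradient of `y` at `x`, as a matrix: `(Dy)ᵢⱼ = ∂yᵢ/∂xⱼ`. -/
def Dmat {m n : ℕ} (y : EuclideanSpace ℝ (Fin n) → EuclideanSpace ℝ (Fin m))
    (x : EuclideanSpace ℝ (Fin n)) : Matrix (Fin m) (Fin n) ℝ :=
  Matrix.of fun i j => fderiv ℝ y x (EuclideanSpace.single j 1) i

/-- The matrix `A` regarded as a continuous linear map `ℝⁿ → ℝᵐ`. -/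
def toCLM {m n : ℕ} (A : Matrix (Fin m) (Fin n) ℝ) :
    EuclideanSpace ℝ (Fin n) →L[ℝ] EuclideanSpace ℝ (Fin m) :=
  LinearMap.toContinuousLinearMap (Matrix.toEuclideanLin A)

/-- `Ω_{K,ε}(y) = {x ∈ Ω : Dy(x) ∈ N_ε(K)}`. -/
def phaseSet {m n : ℕ} (Ω : Set (EuclideanSpace ℝ (Fin n)))
    (y : EuclideanSpace ℝ (Fin n) → EuclideanSpace ℝ (Fin m))
    (K : Set (Matrix (Fin m) (Fin n) ℝ)) (ε : ℝ) : Set (EuclideanSpace ℝ (Fin n)) :=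
  {x ∈ Ω | Dmat y x ∈ Nbhd K ε}

/-- The transition layer `T_ε(y) = {x ∈ Ω : Dy(x) ∉ N_ε(K₁) ∪ N_ε(K₂)}`. -/
def transLayer {m n : ℕ} (Ω : Set (EuclideanSpace ℝ (Fin n)))
    (y : EuclideanSpace ℝ (Fin n) → EuclideanSpace ℝ (Fin m))
    (K₁ K₂ : Set (Matrix (Fin m) (Fin n) ℝ)) (ε : ℝ) : Set (EuclideanSpace ℝ (Fin n)) :=
  {x ∈ Ω | Dmat y x ∉ Nbhd K₁ ε ∪ Nbhd K₂ ε}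

/-- `x.toENNReal` for `x : EReal` (not yet in this Mathlib version). -/
def erealToENNReal (x : EReal) : ℝ≥0∞ :=
  if x = ⊤ then ⊤ else ENNReal.ofReal x.toReal

/-- The integral of an `ℝ ∪ {±∞}`-valued function `g` over `G`, defined as the difference of the
lower integrals of the positive and negative parts (well defined, with value in `ℝ ∪ {+∞}`,
whenever the negative part has finite integral, e.g. when `g` is bounded below and `G` has
finite measure). -/
def eintegral {n : ℕ} (G : Set (EuclideanSpace ℝ (Fin n)))
    (g : EuclideanSpace ℝ (Fin n) → EReal) : EReal :=
  ((∫⁻ x in G, erealToENNReal (g x)) : ℝ≥0∞) -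
    (((∫⁻ x in G, erealToENNReal (-(g x))) : ℝ≥0∞) : EReal)

/-- The outer radius `R(C)`. -/
def outerRad {n : ℕ} (C : Set (EuclideanSpace ℝ (Fin n))) : ℝ :=
  sInf {ρ : ℝ | 0 < ρ ∧ ∃ a, C ⊆ Metric.ball a ρ}

/-- The inner radius `r(C)`. -/
def innerRad {n : ℕ} (C : Set (EuclideanSpace ℝ (Fin n))) : ℝ :=
  sSup {ρ : ℝ | 0 < ρ ∧ ∃ a, Metric.ball a ρ ⊆ C}

/-- The eccentricity `E(C) = √(1 − r(C)²/R(C)²)`. -/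
def eccentricity {n : ℕ} (C : Set (EuclideanSpace ℝ (Fin n))) : ℝ :=
  Real.sqrt (1 - innerRad C ^ 2 / outerRad C ^ 2)

end Incompat

open Incompat NNReal Bornology

/-!
A path in `Ω` has compact image, so it stays a positive distance away from `Ωᶜ`. Hence the
points at distance `≥ ε` from `Ωᶜ`, a compact set, are covered by the increasing open sets
"joined to a base point inside `(cthickening (1/(k+1)) Ωᶜ)ᶜ`", and by compactness a single one
of them already contains all of them.
-/

open Metric Set

section PseudoMetric

variable {X : Type*} [PseudoMetricSpace X]

theorem closedBall_subset_compl_of_notMem_cthickening {s : Set X} {x : X} {δ : ℝ}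
    (hx : x ∉ cthickening δ s) : closedBall x δ ⊆ sᶜ :=
  fun _ hy hys => hx (mem_cthickening_of_dist_le x _ δ s hys (dist_comm x _ ▸ hy))

theorem JoinedIn.exists_continuousOn_Icc {F : Set X} {x y : X} (h : JoinedIn F x y) :
    ∃ ξ : ℝ → X, ContinuousOn ξ (Icc 0 1) ∧ ξ 0 = x ∧ ξ 1 = y ∧
      ∀ t ∈ Icc (0 : ℝ) 1, ξ t ∈ F :=
  ⟨h.somePath.extend, h.somePath.continuous_extend.continuousOn, h.somePath.extend_zero,
    h.somePath.extend_one, fun t ht => by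
      rw [h.somePath.extend_apply ht]; exact h.somePath_mem _⟩

theorem JoinedIn.exists_pos_joinedIn_compl_cthickening {Ω : Set X} (hΩ : IsOpen Ω) {x y : X}
    (h : JoinedIn Ω x y) : ∃ δ > 0, JoinedIn (cthickening δ Ωᶜ)ᶜ x y := by
  have hdisj : Disjoint (range h.somePath) Ωᶜ :=
    disjoint_compl_right_iff_subset.mpr (range_subset_iff.mpr h.somePath_mem)
  obtain ⟨δ, hδ, hδdisj⟩ :=
    hdisj.exists_cthickenings (isCompact_range h.somePath.continuous) hΩ.isClosed_compl
  exact ⟨δ, hδ, h.somePath,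
    fun t => hδdisj.notMem_of_mem_left (self_subset_cthickening _ (mem_range_self t))⟩

theorem IsPathConnected.exists_joinedIn_compl_cthickening [LocallyPathConnectedSpace X]
    {Ω K : Set X}
    (hΩ : IsPathConnected Ω) (hΩo : IsOpen Ω) (hK : IsCompact K) (hKΩ : K ⊆ Ω) :
    ∃ δ > 0, ∀ x ∈ K, ∀ y ∈ K, JoinedIn (cthickening δ Ωᶜ)ᶜ x y := by
  rcases K.eq_empty_or_nonempty with rfl | ⟨x₀, hx₀⟩
  · exact ⟨1, one_pos, by simp⟩
  let V : ℕ → Set X := fun k => pathComponentIn (cthickening (1 / (k + 1)) Ωᶜ)ᶜ x₀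
  have hV_open (k : ℕ) : IsOpen (V k) :=
    isClosed_cthickening.isOpen_compl.pathComponentIn x₀
  have hV_mono : Monotone V := fun k l hkl => pathComponentIn_mono <|
    compl_subset_compl.mpr (cthickening_mono (Nat.one_div_le_one_div hkl) _)
  have hK_cover : K ⊆ ⋃ k, V k := fun y hy => by
    obtain ⟨δ, hδ, hjoin⟩ := (hΩ.joinedIn x₀ (hKΩ hx₀) y (hKΩ hy)
      ).exists_pos_joinedIn_compl_cthickening hΩo
    obtain ⟨k, hk⟩ := exists_nat_one_div_lt hδ
    exact mem_iUnion.mpr ⟨k, hjoin.mono (compl_subset_compl.mpr (cthickening_mono hk.le _))⟩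
  obtain ⟨k, hk⟩ := hK.elim_directed_cover V hV_open hK_cover hV_mono.directed_le
  exact ⟨1 / (k + 1), Nat.one_div_pos_of_nat, fun x hx y hy => (hk hx).symm.trans (hk hy)⟩

end PseudoMetric

theorem isCompact_setOf_le_infDist_compl {X : Type*} [MetricSpace X] [ProperSpace X]
    {Ω : Set X} (hΩ : IsBounded Ω) {ε : ℝ} (hε : 0 < ε) :
    IsCompact {x | ε ≤ infDist x Ωᶜ} ∧ {x | ε ≤ infDist x Ωᶜ} ⊆ Ω := by
  have hsub : {x | ε ≤ infDist x Ωᶜ} ⊆ Ω := fun x hx => by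
    by_contra hxΩ
    exact hε.not_ge (infDist_zero_of_mem (s := Ωᶜ) hxΩ ▸ hx)
  exact ⟨isCompact_of_isClosed_isBounded (isClosed_le continuous_const (continuous_infDist_pt _))
    (hΩ.subset hsub), hsub⟩

theorem tube_lemma_general
    (n : ℕ) (Ω : Set (EuclideanSpace ℝ (Fin n)))
    (hΩopen : IsOpen Ω) (hΩconn : IsConnected Ω) (hΩbdd : IsBounded Ω)
    (ε : ℝ) (hε : 0 < ε) :
    ∃ δ > (0:ℝ), ∀ x₁ ∈ Ω, ∀ x₂ ∈ Ω,
      ε ≤ Metric.infDist x₁ Ωᶜ → ε ≤ Metric.infDist x₂ Ωᶜ →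
      ∃ ξ : ℝ → EuclideanSpace ℝ (Fin n),
        ContinuousOn ξ (Set.Icc 0 1) ∧ ξ 0 = x₁ ∧ ξ 1 = x₂ ∧
        (∀ t ∈ Set.Icc (0:ℝ) 1, ξ t ∈ Ω) ∧
        (∀ t ∈ Set.Icc (0:ℝ) 1, Metric.closedBall (ξ t) δ ⊆ Ω) := by
  obtain ⟨hK, hKΩ⟩ := isCompact_setOf_le_infDist_compl hΩbdd hε
  obtain ⟨δ, hδ, hjoin⟩ := (hΩopen.isConnected_iff_isPathConnected.mp hΩconn
    ).exists_joinedIn_compl_cthickening hΩopen hK hKΩ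
  refine ⟨δ, hδ, fun x₁ _ x₂ _ h₁ h₂ => ?_⟩
  obtain ⟨ξ, hξ, hξ₀, hξ₁, hξF⟩ := (hjoin x₁ h₁ x₂ h₂).exists_continuousOn_Icc
  have hball (t) (ht : t ∈ Icc (0 : ℝ) 1) : closedBall (ξ t) δ ⊆ Ω := by
    simpa using closedBall_subset_compl_of_notMem_cthickening (hξF t ht)
  exact ⟨ξ, hξ, hξ₀, hξ₁, fun t ht => hball t ht (mem_closedBall_self hδ.le), hball⟩

/-- the tube lemma. In a bounded domain `Ω ⊆ ℝⁿ`, for every `ε > 0` there is a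
`δ > 0` such that any two points at distance `≥ ε` from the complement of `Ω` are joined by a
`δ`-tube. -/
theorem tube_lemma
    (n : ℕ) (hn : 2 ≤ n) (Ω : Set (EuclideanSpace ℝ (Fin n)))
    (hΩopen : IsOpen Ω) (hΩconn : IsConnected Ω) (hΩbdd : IsBounded Ω)
    (ε : ℝ) (hε : 0 < ε) :
    ∃ δ > (0:ℝ), ∀ x₁ ∈ Ω, ∀ x₂ ∈ Ω,
      ε ≤ Metric.infDist x₁ Ωᶜ → ε ≤ Metric.infDist x₂ Ωᶜ →
      ∃ ξ : ℝ → EuclideanSpace ℝ (Fin n),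
        ContinuousOn ξ (Set.Icc 0 1) ∧ ξ 0 = x₁ ∧ ξ 1 = x₂ ∧
        (∀ t ∈ Set.Icc (0:ℝ) 1, ξ t ∈ Ω) ∧
        (∀ t ∈ Set.Icc (0:ℝ) 1, Metric.closedBall (ξ t) δ ⊆ Ω) :=
  tube_lemma_general n Ω hΩopen hΩconn hΩbdd ε hε
end
end

section
/- Let n ≥ 2, let 0 < α < 1, and set Ωᵅ = B(0,1) ∪ B((2−α)e₁, 1) ⊆ ℝⁿ (open balls) and r_α = √(α − α²/4). Then: (i) Ωᵅ is B(0,1)-filled; (ii) Ωᵅ is B(0,r)-connected for every r with 0 < r ≤ r_α; and (iii) Ωᵅ is not B(0,r)-connected for any r > r_α. -/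
/-!
Rotations fix balls about the origin, so the rigid copies of `B(0,r)` inside `Ωᵅ` are the balls
`B(ξ,r) ⊆ Ωᵅ`, and `r`-connectedness amounts to joining their centres by paths of admissible
centres. The two unit balls meet in a lens whose waist, on the bisecting hyperplane
`⟪x, e₁⟫ = 1 - α/2`, has radius `r_α`. For `r ≤ r_α` a ball of radius `r` slides along the axis
from `0` to `(2-α)e₁`, which links all balls of radius `r` inside either unit ball. For `r > r_α`
no admissible ball is centred on the bisecting hyperplane, yet the centre of a ball moving from
the far left of `Ωᵅ` to its far right has to cross it.
-/

open MeasureTheory Matrix Pointwise ENNReal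

noncomputable section

open Incompat NNReal Bornology

open Metric Set
open scoped RealInnerProductSpace

section RigidMotions

variable {n : ℕ}

lemma one_mem_SO : (1 : Matrix (Fin n) (Fin n) ℝ) ∈ SO n := ⟨by simp, by simp⟩

lemma rigidImage_ball {Q : Matrix (Fin n) (Fin n) ℝ} (hQ : Q ∈ SO n)
    (ξ : EuclideanSpace ℝ (Fin n)) (ρ : ℝ) :
    rigidImage ξ Q (ball 0 ρ) = ball ξ ρ := by
  have hU : toEuclideanCLM (𝕜 := ℝ) Q ∈ unitary _ :=
    Unitary.map_mem _ <| Matrix.mem_unitaryGroup_iff'.2 <| by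
      rw [star_eq_conjTranspose, conjTranspose_eq_transpose_of_trivial, hQ.1]
  let f := (Unitary.linearIsometryEquiv ⟨_, hU⟩).toIsometryEquiv.trans (IsometryEquiv.addLeft ξ)
  calc rigidImage ξ Q (ball 0 ρ) = f '' ball 0 ρ := rfl
    _ = ball ξ ρ := by simp [f.image_ball, f]

lemma isCFilled_ball_iff {Ω : Set (EuclideanSpace ℝ (Fin n))} {ρ : ℝ} :
    IsCFilled Ω (ball 0 ρ) ↔ ∀ x ∈ Ω, ∃ a, x ∈ ball a ρ ∧ ball a ρ ⊆ Ω := by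
  refine ⟨fun h x hx => ?_, fun h x hx => ?_⟩
  · obtain ⟨ξ, Q, hQ, hxξ, hξΩ⟩ := h x hx
    rw [rigidImage_ball hQ] at hxξ hξΩ
    exact ⟨ξ, hxξ, hξΩ⟩
  · obtain ⟨a, hxa, haΩ⟩ := h x hx
    exact ⟨a, 1, one_mem_SO, by rwa [rigidImage_ball one_mem_SO],
      by rwa [rigidImage_ball one_mem_SO]⟩

lemma congrConn_ball_of_joinedIn {Ω : Set (EuclideanSpace ℝ (Fin n))} {r : ℝ}
    {a b : EuclideanSpace ℝ (Fin n)} (h : JoinedIn {c | ball c r ⊆ Ω} a b) :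
    CongrConn Ω (ball 0 r) (ball a r) (ball b r) := by
  obtain ⟨γ, hγ⟩ := h
  refine ⟨γ.extend, fun _ => 1, γ.continuous_extend.continuousOn, continuousOn_const,
    fun _ _ => one_mem_SO, ?_, ?_, fun t ht => ?_⟩
  · rw [rigidImage_ball one_mem_SO, Path.extend_zero]
  · rw [rigidImage_ball one_mem_SO, Path.extend_one]
  · rw [rigidImage_ball one_mem_SO, Path.extend_apply γ ht]
    exact hγ ⟨t, ht⟩

lemma CongrConn.exists_path_of_ball {Ω D₁ D₂ : Set (EuclideanSpace ℝ (Fin n))} {r : ℝ}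
    (h : CongrConn Ω (ball 0 r) D₁ D₂) :
    ∃ ξ : ℝ → EuclideanSpace ℝ (Fin n), ContinuousOn ξ (Icc 0 1) ∧
      D₁ = ball (ξ 0) r ∧ D₂ = ball (ξ 1) r ∧ ∀ t ∈ Icc (0 : ℝ) 1, ball (ξ t) r ⊆ Ω := by
  obtain ⟨ξ, Q, hξ, -, hQ, rfl, rfl, hΩ⟩ := h
  refine ⟨ξ, hξ, rigidImage_ball (hQ 0 ⟨le_rfl, zero_le_one⟩) _ _,
    rigidImage_ball (hQ 1 ⟨zero_le_one, le_rfl⟩) _ _, fun t ht => ?_⟩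
  rw [← rigidImage_ball (hQ t ht)]
  exact hΩ t ht

lemma isCConnected_ball_of_isPathConnected {Ω K : Set (EuclideanSpace ℝ (Fin n))} {r : ℝ}
    (hK : IsPathConnected K) (hKΩ : ∀ a ∈ K, ball a r ⊆ Ω) (hΩK : Ω ⊆ ⋃ a ∈ K, ball a r) :
    IsCConnected Ω (ball 0 r) := by
  refine ⟨(fun a => ball a r) '' K, ?_, ?_, ?_⟩
  · rintro _ ⟨a, ha, rfl⟩
    exact hKΩ a ha
  · rintro _ ⟨a, ha, rfl⟩ _ ⟨b, hb, rfl⟩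
    exact congrConn_ball_of_joinedIn ((hK.joinedIn a ha b hb).mono hKΩ)
  · intro x hx
    obtain ⟨a, ha, hxa⟩ := mem_iUnion₂.1 (hΩK hx)
    exact ⟨ball a r, mem_image_of_mem _ ha, hxa⟩

end RigidMotions

section Geometry

variable {E : Type*} [NormedAddCommGroup E]

lemma exists_mem_closedBall_and_mem_ball [NormedSpace ℝ E] {b x : E} {R r : ℝ}
    (hx : x ∈ ball b R) (hr : 0 < r) (hrR : r ≤ R) :
    ∃ a ∈ closedBall b (R - r), x ∈ ball a r := by
  have hR : 0 < R := hr.trans_le hrR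
  have hc : 0 ≤ 1 - r / R := sub_nonneg.2 ((div_le_one hR).2 hrR)
  rw [mem_ball'] at hx
  refine ⟨AffineMap.lineMap b x (1 - r / R), ?_, ?_⟩
  · rw [mem_closedBall, dist_lineMap_left, Real.norm_of_nonneg hc]
    calc (1 - r / R) * dist b x ≤ (1 - r / R) * R := by gcongr
      _ = R - r := by field_simp
  · rw [mem_ball', dist_lineMap_right, show (1 : ℝ) - (1 - r / R) = r / R by ring,
      Real.norm_of_nonneg (by positivity)]
    calc r / R * dist b x < r / R * R := by gcongr
      _ = r := by field_simp

variable [InnerProductSpace ℝ E]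

lemma abs_inner_sub_le_dist {e : E} (he : ‖e‖ = 1) (x y : E) :
    |⟪x, e⟫ - ⟪y, e⟫| ≤ dist x y := by
  simpa [← inner_sub_left, he, dist_eq_norm] using abs_real_inner_le_norm (x - y) e

lemma norm_sub_smul_sq {e : E} (he : ‖e‖ = 1) (y : E) (s : ℝ) :
    ‖y - s • e‖ ^ 2 = ‖y‖ ^ 2 - 2 * s * ⟪y, e⟫ + s ^ 2 := by
  rw [norm_sub_sq_real, real_inner_smul_right, norm_smul, he, Real.norm_eq_abs, mul_one, sq_abs]
  ring

lemma ball_smul_subset_union_ball {e : E} (he : ‖e‖ = 1) {d t r : ℝ} (ht₀ : 0 ≤ t)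
    (htd : t ≤ d) (hr : r ^ 2 + (d / 2) ^ 2 ≤ 1) :
    ball (t • e) r ⊆ ball 0 1 ∪ ball (d • e) 1 := by
  intro y hy
  rw [mem_ball, dist_eq_norm] at hy
  have hy2 : ‖y - t • e‖ ^ 2 < r ^ 2 := by gcongr
  rw [norm_sub_smul_sq he] at hy2
  rcases le_or_gt ⟪y, e⟫ (d / 2) with hp | hp
  · left
    rw [mem_ball, dist_zero_right, ← sq_lt_one_iff₀ (norm_nonneg y)]
    nlinarith [sq_nonneg (t - d / 2), mul_nonneg ht₀ (by linarith : 0 ≤ d - 2 * ⟪y, e⟫)]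
  · right
    rw [mem_ball, dist_eq_norm, ← sq_lt_one_iff₀ (norm_nonneg _), norm_sub_smul_sq he]
    nlinarith [sq_nonneg (t - d / 2), mul_nonneg (by linarith : 0 ≤ d - t)
      (by linarith : 0 ≤ 2 * ⟪y, e⟫ - d)]

/-- The witness is `ξ ± s u`, the sign chosen so that `±⟪ξ, u⟫ ≥ 0`; the claim is then Pythagoras
for every `v ∈ uᗮ`. -/
lemma exists_dist_eq_and_sq_add_le {u : E} (hu : ‖u‖ = 1) (ξ : E) {s : ℝ} (hs : 0 ≤ s) :
    ∃ z, dist z ξ = s ∧ ∀ v, ⟪v, u⟫ = 0 → ‖ξ - v‖ ^ 2 + s ^ 2 ≤ ‖z - v‖ ^ 2 := by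
  obtain ⟨σ, hσ, hσξ⟩ : ∃ σ : ℝ, |σ| = 1 ∧ 0 ≤ σ * ⟪ξ, u⟫ := by
    rcases le_total 0 ⟪ξ, u⟫ with h | h
    · exact ⟨1, abs_one, by simpa using h⟩
    · exact ⟨-1, by simp, by simpa using h⟩
  refine ⟨ξ + (σ * s) • u, ?_, fun v hv => ?_⟩
  · rw [dist_eq_norm, add_sub_cancel_left, norm_smul, hu, Real.norm_eq_abs, abs_mul, hσ,
      abs_of_nonneg hs]
    ring
  · have hz : ξ + (σ * s) • u - v = (ξ - v) + (σ * s) • u := by abel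
    rw [hz, norm_add_sq_real, real_inner_smul_right, inner_sub_left, hv, norm_smul, hu,
      Real.norm_eq_abs, abs_mul, hσ, abs_of_nonneg hs]
    nlinarith [mul_nonneg hs hσξ]

lemma sq_add_lt_one_of_ball_subset {e u : E} (hu : ‖u‖ = 1) (hue : ⟪e, u⟫ = 0) {ξ : E}
    {d r s : ℝ} (h : ball ξ r ⊆ ball 0 1 ∪ ball (d • e) 1) (hs : 0 ≤ s) (hsr : s < r) :
    ‖ξ‖ ^ 2 + s ^ 2 < 1 ∨ ‖ξ - d • e‖ ^ 2 + s ^ 2 < 1 := by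
  obtain ⟨z, hzξ, hz⟩ := exists_dist_eq_and_sq_add_le hu ξ hs
  have h0 := hz 0 (inner_zero_left _)
  have hd := hz (d • e) (by rw [real_inner_smul_left, hue, mul_zero])
  simp only [sub_zero] at h0
  rcases h (show z ∈ ball ξ r by rwa [mem_ball, hzξ]) with hz1 | hz1
  · rw [mem_ball, dist_zero_right, ← sq_lt_one_iff₀ (norm_nonneg _)] at hz1
    exact Or.inl (h0.trans_lt hz1)
  · rw [mem_ball, dist_eq_norm, ← sq_lt_one_iff₀ (norm_nonneg _)] at hz1
    exact Or.inr (hd.trans_lt hz1)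

lemma le_one_of_ball_subset {e u : E} (hu : ‖u‖ = 1) (hue : ⟪e, u⟫ = 0) {ξ : E} {d r : ℝ}
    (h : ball ξ r ⊆ ball 0 1 ∪ ball (d • e) 1) : r ≤ 1 := by
  by_contra! hr
  rcases sq_add_lt_one_of_ball_subset hu hue h zero_le_one hr with h1 | h1 <;>
    nlinarith [sq_nonneg ‖ξ‖, sq_nonneg ‖ξ - d • e‖]

lemma not_ball_subset_of_inner_eq_half {e u : E} (he : ‖e‖ = 1) (hu : ‖u‖ = 1)
    (hue : ⟪e, u⟫ = 0) {ξ : E} {d r : ℝ} (hr : √(1 - (d / 2) ^ 2) < r)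
    (hξ : ⟪ξ, e⟫ = d / 2) :
    ¬ ball ξ r ⊆ ball 0 1 ∪ ball (d • e) 1 := by
  intro h
  have hs : 1 - (d / 2) ^ 2 ≤ √(1 - (d / 2) ^ 2) ^ 2 := Real.sq_sqrt' ▸ le_max_left _ _
  have h0 := abs_inner_sub_le_dist he ξ 0
  have hd := abs_inner_sub_le_dist he ξ (d • e)
  rw [inner_zero_left, sub_zero, hξ, dist_zero_right] at h0
  rw [real_inner_smul_left, real_inner_self_eq_norm_sq, he, hξ, dist_eq_norm] at hd
  have h0' := sq_le_sq' (abs_le.1 h0).1 (abs_le.1 h0).2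
  have hd' := sq_le_sq' (abs_le.1 hd).1 (abs_le.1 hd).2
  rcases sq_add_lt_one_of_ball_subset hu hue h (Real.sqrt_nonneg _) hr with h1 | h1 <;>
    nlinarith

end Geometry

section TwoBalls

variable {n : ℕ}

lemma isCFilled_union_ball (a b : EuclideanSpace ℝ (Fin n)) (ρ : ℝ) :
    IsCFilled (ball a ρ ∪ ball b ρ) (ball 0 ρ) :=
  isCFilled_ball_iff.2 fun _ hx => hx.elim (fun h => ⟨a, h, subset_union_left⟩)
    (fun h => ⟨b, h, subset_union_right⟩)

variable {e : EuclideanSpace ℝ (Fin n)} {d r : ℝ}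

lemma isCConnected_union_ball (he : ‖e‖ = 1) (hd : 0 ≤ d) (hr₀ : 0 < r)
    (hr : r ≤ √(1 - (d / 2) ^ 2)) :
    IsCConnected (ball 0 1 ∪ ball (d • e) 1) (ball 0 r) := by
  have hr2 : r ^ 2 + (d / 2) ^ 2 ≤ 1 := by
    have := (Real.le_sqrt' hr₀).1 hr
    linarith
  have hr1 : r ≤ 1 := by nlinarith
  have hB : ∀ b : EuclideanSpace ℝ (Fin n), ∀ a ∈ closedBall b (1 - r), ball a r ⊆ ball b 1 :=
    fun b a ha => ball_subset_ball' (by rw [mem_closedBall] at ha; linarith)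
  have hcenter : (0 : ℝ) ≤ 1 - r := by linarith
  apply isCConnected_ball_of_isPathConnected
    (K := closedBall 0 (1 - r) ∪ segment ℝ 0 (d • e) ∪ closedBall (d • e) (1 - r))
  · refine (((convex_closedBall _ _).isPathConnected (nonempty_closedBall.2 hcenter)).union
      ((convex_segment _ _).isPathConnected ⟨0, left_mem_segment _ _ _⟩)
      ⟨0, mem_closedBall_self hcenter, left_mem_segment _ _ _⟩).union
      ((convex_closedBall _ _).isPathConnected (nonempty_closedBall.2 hcenter))
      ⟨d • e, Or.inr (right_mem_segment _ _ _), mem_closedBall_self hcenter⟩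
  · rintro a ((ha | ⟨s, t, hs, ht, hst, rfl⟩) | ha)
    · exact (hB 0 a ha).trans subset_union_left
    · rw [smul_zero, zero_add, smul_smul]
      exact ball_smul_subset_union_ball he (mul_nonneg ht hd)
        (mul_le_of_le_one_left hd (by linarith)) hr2
    · exact (hB _ a ha).trans subset_union_right
  · rintro x (hx | hx)
    · obtain ⟨a, ha, hxa⟩ := exists_mem_closedBall_and_mem_ball hx hr₀ hr1
      exact mem_iUnion₂.2 ⟨a, Or.inl (Or.inl ha), hxa⟩
    · obtain ⟨a, ha, hxa⟩ := exists_mem_closedBall_and_mem_ball hx hr₀ hr1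
      exact mem_iUnion₂.2 ⟨a, Or.inr ha, hxa⟩

lemma not_isCConnected_union_ball (he : ‖e‖ = 1) {u : EuclideanSpace ℝ (Fin n)}
    (hu : ‖u‖ = 1) (hue : ⟪e, u⟫ = 0) (hd₀ : 0 < d) (hd₂ : d ≤ 2)
    (hr : √(1 - (d / 2) ^ 2) < r) :
    ¬ IsCConnected (ball 0 1 ∪ ball (d • e) 1) (ball 0 r) := by
  rintro ⟨𝒞, -, h𝒞, hΩ𝒞⟩
  have hxL : (-(1 - d / 2)) • e ∈ ball 0 1 := by
    rw [mem_ball, dist_zero_right, norm_smul, he, mul_one, norm_neg,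
      Real.norm_of_nonneg (by linarith)]
    linarith
  have hxR : (1 + d / 2) • e ∈ ball (d • e) 1 := by
    rw [mem_ball, dist_eq_norm, ← sub_smul, norm_smul, he, mul_one,
      Real.norm_of_nonneg (by linarith)]
    linarith
  obtain ⟨D₁, hD₁, hxD₁⟩ := mem_sUnion.1 (hΩ𝒞 (Or.inl hxL))
  obtain ⟨D₂, hD₂, hxD₂⟩ := mem_sUnion.1 (hΩ𝒞 (Or.inr hxR))
  obtain ⟨ξ, hξ, rfl, rfl, hξΩ⟩ := CongrConn.exists_path_of_ball (h𝒞 D₁ hD₁ D₂ hD₂)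
  have hr1 : r ≤ 1 := le_one_of_ball_subset hu hue (hξΩ 0 ⟨le_rfl, zero_le_one⟩)
  have h0 : ⟪ξ 0, e⟫ < d / 2 := by
    have := (abs_inner_sub_le_dist he _ _).trans_lt (mem_ball.1 hxD₁)
    rw [real_inner_smul_left, real_inner_self_eq_norm_sq, he] at this
    linarith [(abs_lt.1 this).1]
  have h1 : d / 2 < ⟪ξ 1, e⟫ := by
    have := (abs_inner_sub_le_dist he _ _).trans_lt (mem_ball.1 hxD₂)
    rw [real_inner_smul_left, real_inner_self_eq_norm_sq, he] at this
    linarith [(abs_lt.1 this).2]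
  obtain ⟨t, ht, hte⟩ := intermediate_value_Icc zero_le_one (hξ.inner continuousOn_const)
    ⟨h0.le, h1.le⟩
  exact not_ball_subset_of_inner_eq_half he hu hue hr hte (hξΩ t ht)

end TwoBalls

/-- For `0 < α < 1`, the union `Ωᵅ` of the unit balls centred at `0` and
`(2−α)e₁` is `B(0,1)`-filled, is `B(0,r)`-connected exactly for `0 < r ≤ r_α`, where
`r_α = √(α − α²/4)`. -/
theorem two_balls_example
    (n : ℕ) (hn : 2 ≤ n) (α : ℝ) (hα0 : 0 < α) (hα1 : α < 1) :
    IsCFilled (Metric.ball (0 : EuclideanSpace ℝ (Fin n)) 1 ∪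
        Metric.ball ((2 - α) • EuclideanSpace.single (⟨0, by omega⟩ : Fin n) (1:ℝ)) 1)
      (Metric.ball (0 : EuclideanSpace ℝ (Fin n)) 1) ∧
    (∀ r : ℝ, 0 < r → r ≤ Real.sqrt (α - α ^ 2 / 4) →
      IsCConnected (Metric.ball (0 : EuclideanSpace ℝ (Fin n)) 1 ∪
          Metric.ball ((2 - α) • EuclideanSpace.single (⟨0, by omega⟩ : Fin n) (1:ℝ)) 1)
        (Metric.ball (0 : EuclideanSpace ℝ (Fin n)) r)) ∧
    (∀ r : ℝ, Real.sqrt (α - α ^ 2 / 4) < r →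
      ¬ IsCConnected (Metric.ball (0 : EuclideanSpace ℝ (Fin n)) 1 ∪
          Metric.ball ((2 - α) • EuclideanSpace.single (⟨0, by omega⟩ : Fin n) (1:ℝ)) 1)
        (Metric.ball (0 : EuclideanSpace ℝ (Fin n)) r)) := by
  have he : ‖EuclideanSpace.single (⟨0, by omega⟩ : Fin n) (1 : ℝ)‖ = 1 := by simp
  have hue : ⟪EuclideanSpace.single (⟨0, by omega⟩ : Fin n) (1 : ℝ),
      EuclideanSpace.single ⟨1, by omega⟩ 1⟫ = 0 := by
    simp [EuclideanSpace.inner_single_left]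
  have hrα : α - α ^ 2 / 4 = 1 - ((2 - α) / 2) ^ 2 := by ring
  refine ⟨isCFilled_union_ball _ _ 1, fun r hr₀ hr => ?_, fun r hr => ?_⟩
  · exact isCConnected_union_ball he (by linarith) hr₀ (hrα ▸ hr)
  · exact not_isCConnected_union_ball he (by simp) hue (by linarith) (by linarith) (hrα ▸ hr)
end
end

section
/- Let Ω = (0,1)² ⊆ ℝ², let 1 denote the 2×2 identity matrix, and set K₂ = {0, 2 e₂⊗e₂} ⊆ M^{2×2}. If y : Ω → ℝ² is Lipschitz and Dy(x) ∈ {1} ∪ K₂ for almost every x ∈ Ω, then either Dy(x) = 1 for a.e. x ∈ Ω or Dy(x) ∈ K₂ for a.e. x ∈ Ω. (Thus the sets {1} and {0, 2 e₂⊗e₂} are gradient incompatible.) -/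
open MeasureTheory Matrix Pointwise ENNReal

noncomputable section

open Incompat NNReal Bornology

/-!
Every matrix in `{1} ∪ K₂` is diagonal, so `∂₂y₁ = ∂₁y₂ = 0` a.e. in `Ω`. A Lipschitz function of
one variable whose derivative vanishes a.e. is constant (it is absolutely continuous), so by Fubini
`y₁(s, ·)` is constant for a.e. `s`, hence for every `s` by continuity; likewise for `y₂(·, t)`.
Thus `y(s, t) = (F s, G t)` on `Ω`. The diagonal entries of `1` equal `1` and those of the matrices
in `K₂` do not, so `Dy = 1 ↔ F'(s) = 1 ↔ G'(t) = 1` for a.e. `(s, t)`. Freezing a good `s`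
shows that `G'(t) = 1` is then a.e. true or a.e. false in `t`, which is the dichotomy.
-/

open MeasureTheory Set Filter Topology

local notation "ℝ²" => EuclideanSpace ℝ (Fin 2)

local notation "K₂" => ({0, (2:ℝ) • vecMulVec ![0, 1] ![0, 1]} : Set (Matrix (Fin 2) (Fin 2) ℝ))

section Constancy

variable {E : Type*} [NormedAddCommGroup E] [NormedSpace ℝ E]

theorem LipschitzOnWith.eq_of_ae_hasDerivAt_zero {f : ℝ → E} {K : ℝ≥0} {s : Set ℝ}
    (hs : s.OrdConnected) (hf : LipschitzOnWith K f s)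
    (h0 : ∀ᵐ t ∂volume.restrict s, HasDerivAt f 0 t) {a b : ℝ} (ha : a ∈ s) (hb : b ∈ s) :
    f a = f b := by
  have hab : uIcc a b ⊆ s := hs.uIcc_subset ha hb
  obtain ⟨C, hC⟩ := (hf.mono hab).absolutelyContinuousOnInterval.const_of_ae_hasDerivAt_zero <|
    ((ae_restrict_iff' hs.measurableSet).1 h0).mono fun t ht hts => ht (hab hts)
  rw [hC a left_mem_uIcc, hC b right_mem_uIcc]

theorem eq_of_ae_prod_hasDerivAt_zero {u : ℝ × ℝ → E} {I J : Set ℝ} {K : ℝ≥0} (hI : IsOpen I)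
    (hJ : J.OrdConnected) (hu : LipschitzOnWith K u (I ×ˢ J))
    (h0 : ∀ᵐ z ∂(volume.restrict I).prod (volume.restrict J),
      HasDerivAt (fun t => u (z.1, t)) 0 z.2)
    {s t t' : ℝ} (hs : s ∈ I) (ht : t ∈ J) (ht' : t' ∈ J) : u (s, t) = u (s, t') := by
  have hae : ∀ᵐ s ∂volume.restrict I, u (s, t) = u (s, t') := by
    filter_upwards [Measure.ae_ae_of_ae_prod h0, ae_restrict_mem hI.measurableSet] with r hr0 hrI
    exact (hu.comp (LipschitzWith.prodMk_left r).lipschitzOnWith fun _ hτ => ⟨hrI, hτ⟩)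
      |>.eq_of_ae_hasDerivAt_zero hJ hr0 ht ht'
  have hcont : ∀ τ ∈ J, ContinuousOn (fun r => u (r, τ)) I := fun τ hτ =>
    (hu.comp (LipschitzWith.prodMk_right τ).lipschitzOnWith fun _ hr => ⟨hr, hτ⟩).continuousOn
  exact Measure.eqOn_open_of_ae_eq hae hI (hcont t ht) (hcont t' ht') hs

end Constancy

theorem ae_or_ae_not_of_ae_prod_iff {α β : Type*} [MeasurableSpace α] [MeasurableSpace β]
    {μ : Measure α} {ν : Measure β} [SFinite ν] (hμ : μ ≠ 0) {p : α → Prop} {q : β → Prop}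
    (h : ∀ᵐ z ∂μ.prod ν, p z.1 ↔ q z.2) : (∀ᵐ t ∂ν, q t) ∨ ∀ᵐ t ∂ν, ¬q t := by
  have := ae_neBot.2 hμ
  obtain ⟨s, hs⟩ := (Measure.ae_ae_of_ae_prod h).exists
  by_cases hp : p s
  · exact .inl (hs.mono fun t ht => ht.1 hp)
  · exact .inr (hs.mono fun t ht => mt ht.2 hp)

def finTwoEquivProd : ℝ² ≃L[ℝ] ℝ × ℝ :=
  (EuclideanSpace.equiv (Fin 2) ℝ).trans (ContinuousLinearEquiv.finTwoArrow ℝ ℝ)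

namespace finTwoEquivProd

@[simp] theorem symm_apply_zero (p : ℝ × ℝ) : finTwoEquivProd.symm p 0 = p.1 := rfl

@[simp] theorem symm_apply_one (p : ℝ × ℝ) : finTwoEquivProd.symm p 1 = p.2 := rfl

theorem symm_apply_coords (x : ℝ²) : finTwoEquivProd.symm (x 0, x 1) = x :=
  finTwoEquivProd.symm_apply_apply x

theorem measurePreserving : MeasurePreserving finTwoEquivProd :=
  (volume_preserving_finTwoArrow ℝ).comp (PiLp.volume_preserving_ofLp (Fin 2))

theorem measurePreserving_restrict (I J : Set ℝ) :
    MeasurePreserving finTwoEquivProd (volume.restrict {x : ℝ² | x 0 ∈ I ∧ x 1 ∈ J})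
      ((volume.restrict I).prod (volume.restrict J)) := by
  rw [Measure.prod_restrict]
  exact measurePreserving.restrict_preimage_emb
    finTwoEquivProd.toHomeomorph.measurableEmbedding (I ×ˢ J)

theorem measurePreserving_symm_restrict (I J : Set ℝ) :
    MeasurePreserving finTwoEquivProd.symm ((volume.restrict I).prod (volume.restrict J))
      (volume.restrict {x : ℝ² | x 0 ∈ I ∧ x 1 ∈ J}) :=
  (measurePreserving_restrict I J).symm finTwoEquivProd.toHomeomorph.toMeasurableEquiv

end finTwoEquivProd

theorem hasDerivAt_finTwoEquivProd_symm_fst (s t : ℝ) :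
    HasDerivAt (fun s => finTwoEquivProd.symm (s, t)) (EuclideanSpace.single 0 1) s := by
  have h : finTwoEquivProd.symm (1, 0) = EuclideanSpace.single 0 1 := by
    ext i; fin_cases i <;> simp
  exact h ▸ finTwoEquivProd.symm.hasFDerivAt.comp_hasDerivAt s
    ((hasDerivAt_id s).prodMk (hasDerivAt_const s t))

theorem hasDerivAt_finTwoEquivProd_symm_snd (s t : ℝ) :
    HasDerivAt (fun t => finTwoEquivProd.symm (s, t)) (EuclideanSpace.single 1 1) t := by
  have h : finTwoEquivProd.symm (0, 1) = EuclideanSpace.single 1 1 := by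
    ext i; fin_cases i <;> simp
  exact h ▸ finTwoEquivProd.symm.hasFDerivAt.comp_hasDerivAt t
    ((hasDerivAt_const t s).prodMk (hasDerivAt_id t))

section Slices

variable {y : ℝ² → ℝ²} {x : ℝ²}

theorem DifferentiableAt.hasDerivAt_Dmat_fst (hy : DifferentiableAt ℝ y x) (i : Fin 2) :
    HasDerivAt (fun s => y (finTwoEquivProd.symm (s, x 1)) i) (Dmat y x i 0) (x 0) :=
  (EuclideanSpace.proj i : ℝ² →L[ℝ] ℝ).hasFDerivAt.comp_hasDerivAt _ <|
    hy.hasFDerivAt.comp_hasDerivAt_of_eq _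
      (hasDerivAt_finTwoEquivProd_symm_fst _ _) (finTwoEquivProd.symm_apply_coords x).symm

theorem DifferentiableAt.hasDerivAt_Dmat_snd (hy : DifferentiableAt ℝ y x) (i : Fin 2) :
    HasDerivAt (fun t => y (finTwoEquivProd.symm (x 0, t)) i) (Dmat y x i 1) (x 1) :=
  (EuclideanSpace.proj i : ℝ² →L[ℝ] ℝ).hasFDerivAt.comp_hasDerivAt _ <|
    hy.hasFDerivAt.comp_hasDerivAt_of_eq _
      (hasDerivAt_finTwoEquivProd_symm_snd _ _) (finTwoEquivProd.symm_apply_coords x).symm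

end Slices

section Phases

variable {D : Matrix (Fin 2) (Fin 2) ℝ}

theorem offDiag_eq_zero_of_eq_one_or_mem (hD : D = 1 ∨ D ∈ K₂) : D 0 1 = 0 ∧ D 1 0 = 0 := by
  rcases hD with rfl | rfl | rfl <;> simp

theorem eq_one_iff_of_eq_one_or_mem (hD : D = 1 ∨ D ∈ K₂) :
    (D = 1 ↔ D 0 0 = 1) ∧ (D = 1 ↔ D 1 1 = 1) := by
  rcases hD with rfl | rfl | rfl
  · simp
  · simp
  · norm_num [← Matrix.ext_iff, Fin.forall_fin_two]

end Phases

section SeparationOfVariables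

variable {I J : Set ℝ} {y : ℝ² → ℝ²} {K : ℝ≥0}

theorem LipschitzOnWith.comp_finTwoEquivProd_symm
    (hy : LipschitzOnWith K y {x : ℝ² | x 0 ∈ I ∧ x 1 ∈ J}) :
    LipschitzOnWith (K * ‖(finTwoEquivProd.symm : ℝ × ℝ →L[ℝ] ℝ²)‖₊)
      (fun p => y (finTwoEquivProd.symm p)) (I ×ˢ J) :=
  hy.comp finTwoEquivProd.symm.lipschitz.lipschitzOnWith fun _ hp => hp

theorem LipschitzOnWith.apply_zero_eq_of_ae_Dmat_zero_one (hI : IsOpen I) (hJ : J.OrdConnected)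
    (hy : LipschitzOnWith K y {x : ℝ² | x 0 ∈ I ∧ x 1 ∈ J})
    (h01 : ∀ᵐ x ∂volume.restrict {x : ℝ² | x 0 ∈ I ∧ x 1 ∈ J},
      DifferentiableAt ℝ y x ∧ Dmat y x 0 1 = 0)
    {x x' : ℝ²} (hx : x 0 ∈ I ∧ x 1 ∈ J) (hx' : x' 0 ∈ I ∧ x' 1 ∈ J) (h : x 0 = x' 0) :
    y x 0 = y x' 0 := by
  have hu := (EuclideanSpace.proj 0 : ℝ² →L[ℝ] ℝ).lipschitz.comp_lipschitzOnWith
    hy.comp_finTwoEquivProd_symm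
  have key := eq_of_ae_prod_hasDerivAt_zero hI hJ hu
    (by
      filter_upwards [(finTwoEquivProd.measurePreserving_symm_restrict I J).quasiMeasurePreserving
        |>.ae h01] with z hz
      simpa [hz.2] using hz.1.hasDerivAt_Dmat_snd 0)
    hx.1 hx.2 hx'.2
  rwa [← finTwoEquivProd.symm_apply_coords x, ← finTwoEquivProd.symm_apply_coords x', ← h]

theorem LipschitzOnWith.apply_one_eq_of_ae_Dmat_one_zero (hI : I.OrdConnected) (hJ : IsOpen J)
    (hy : LipschitzOnWith K y {x : ℝ² | x 0 ∈ I ∧ x 1 ∈ J})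
    (h10 : ∀ᵐ x ∂volume.restrict {x : ℝ² | x 0 ∈ I ∧ x 1 ∈ J},
      DifferentiableAt ℝ y x ∧ Dmat y x 1 0 = 0)
    {x x' : ℝ²} (hx : x 0 ∈ I ∧ x 1 ∈ J) (hx' : x' 0 ∈ I ∧ x' 1 ∈ J) (h : x 1 = x' 1) :
    y x 1 = y x' 1 := by
  have hswap := (LipschitzWith.prod_snd.prodMk LipschitzWith.prod_fst).lipschitzOnWith (s := J ×ˢ I)
  have hu := (EuclideanSpace.proj 1 : ℝ² →L[ℝ] ℝ).lipschitz.comp_lipschitzOnWith <|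
    hy.comp_finTwoEquivProd_symm.comp hswap fun _ hp => ⟨hp.2, hp.1⟩
  have key := eq_of_ae_prod_hasDerivAt_zero hJ hI hu
    (by
      filter_upwards [((finTwoEquivProd.measurePreserving_symm_restrict I J).comp
        Measure.measurePreserving_swap).quasiMeasurePreserving.ae h10] with z hz
      have hderiv := hz.1.hasDerivAt_Dmat_fst 1
      rw [hz.2] at hderiv
      simpa using hderiv)
    hx.2 hx.1 hx'.1
  rwa [← finTwoEquivProd.symm_apply_coords x, ← finTwoEquivProd.symm_apply_coords x', ← h]

theorem IsOpen.hasDerivAt_of_apply_zero_eq {Ω : Set ℝ²} (hΩ : IsOpen Ω) {F : ℝ → ℝ}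
    (hF : ∀ x ∈ Ω, y x 0 = F (x 0)) {x : ℝ²} (hx : x ∈ Ω) (hy : DifferentiableAt ℝ y x) :
    HasDerivAt F (Dmat y x 0 0) (x 0) := by
  refine (hy.hasDerivAt_Dmat_fst 0).congr_of_eventuallyEq ?_
  have hline : Tendsto (fun s => finTwoEquivProd.symm (s, x 1)) (𝓝 (x 0)) (𝓝 x) := by
    simpa [finTwoEquivProd.symm_apply_coords] using
      (hasDerivAt_finTwoEquivProd_symm_fst (x 0) (x 1)).continuousAt.tendsto
  filter_upwards [hline (hΩ.mem_nhds hx)] with s hs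
  simpa using (hF _ hs).symm

theorem IsOpen.hasDerivAt_of_apply_one_eq {Ω : Set ℝ²} (hΩ : IsOpen Ω) {G : ℝ → ℝ}
    (hG : ∀ x ∈ Ω, y x 1 = G (x 1)) {x : ℝ²} (hx : x ∈ Ω) (hy : DifferentiableAt ℝ y x) :
    HasDerivAt G (Dmat y x 1 1) (x 1) := by
  refine (hy.hasDerivAt_Dmat_snd 1).congr_of_eventuallyEq ?_
  have hline : Tendsto (fun t => finTwoEquivProd.symm (x 0, t)) (𝓝 (x 1)) (𝓝 x) := by
    simpa [finTwoEquivProd.symm_apply_coords] using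
      (hasDerivAt_finTwoEquivProd_symm_snd (x 0) (x 1)).continuousAt.tendsto
  filter_upwards [hline (hΩ.mem_nhds hx)] with t ht
  simpa using (hG _ ht).symm

theorem IsOpen.ae_Dmat_eq_one_iff_hasDerivAt {Ω : Set ℝ²} (hΩ : IsOpen Ω) {F G : ℝ → ℝ}
    (hF : ∀ x ∈ Ω, y x 0 = F (x 0)) (hG : ∀ x ∈ Ω, y x 1 = G (x 1))
    (hgood : ∀ᵐ x ∂volume.restrict Ω, DifferentiableAt ℝ y x ∧ (Dmat y x = 1 ∨ Dmat y x ∈ K₂)) :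
    ∀ᵐ x ∂volume.restrict Ω,
      (Dmat y x = 1 ↔ HasDerivAt F 1 (x 0)) ∧ (Dmat y x = 1 ↔ HasDerivAt G 1 (x 1)) := by
  filter_upwards [hgood, ae_restrict_mem hΩ.measurableSet] with x ⟨hd, hD⟩ hx
  have hF' := hΩ.hasDerivAt_of_apply_zero_eq hF hx hd
  have hG' := hΩ.hasDerivAt_of_apply_one_eq hG hx hd
  obtain ⟨h00, h11⟩ := eq_one_iff_of_eq_one_or_mem hD
  exact ⟨h00.trans ⟨fun h => h ▸ hF', hF'.unique⟩, h11.trans ⟨fun h => h ▸ hG', hG'.unique⟩⟩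

end SeparationOfVariables

theorem ae_or_ae_not_of_ae_iff_coords {I J : Set ℝ} (hI : volume I ≠ 0) {p q : ℝ → Prop}
    (h : ∀ᵐ x ∂volume.restrict {x : ℝ² | x 0 ∈ I ∧ x 1 ∈ J}, p (x 0) ↔ q (x 1)) :
    (∀ᵐ x ∂volume.restrict {x : ℝ² | x 0 ∈ I ∧ x 1 ∈ J}, q (x 1)) ∨
      ∀ᵐ x ∂volume.restrict {x : ℝ² | x 0 ∈ I ∧ x 1 ∈ J}, ¬q (x 1) := by
  have hsnd := Measure.quasiMeasurePreserving_snd.comp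
    (finTwoEquivProd.measurePreserving_restrict I J).quasiMeasurePreserving
  refine (ae_or_ae_not_of_ae_prod_iff (μ := volume.restrict I) (p := p)
    (Measure.restrict_eq_zero.not.2 hI) ?_).imp hsnd.ae hsnd.ae
  simpa using (finTwoEquivProd.measurePreserving_symm_restrict I J).quasiMeasurePreserving.ae h

/-- The sets `K₁ = {1}` and `K₂ = {0, 2e₂⊗e₂}` in `M^{2×2}` are gradient
incompatible on `Ω = (0,1)²`. -/
theorem identity_and_pair_gradient_incompatible
    (y : EuclideanSpace ℝ (Fin 2) → EuclideanSpace ℝ (Fin 2))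
    (hy : ∃ K : ℝ≥0, LipschitzOnWith K y
      {x : EuclideanSpace ℝ (Fin 2) | x 0 ∈ Set.Ioo (0:ℝ) 1 ∧ x 1 ∈ Set.Ioo (0:ℝ) 1})
    (hgrad : ∀ᵐ x ∂(volume.restrict
        {x : EuclideanSpace ℝ (Fin 2) | x 0 ∈ Set.Ioo (0:ℝ) 1 ∧ x 1 ∈ Set.Ioo (0:ℝ) 1}),
      Dmat y x = (1 : Matrix (Fin 2) (Fin 2) ℝ) ∨
      Dmat y x ∈ ({0, (2:ℝ) • Matrix.vecMulVec ![(0:ℝ), 1] ![(0:ℝ), 1]} :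
        Set (Matrix (Fin 2) (Fin 2) ℝ))) :
    (∀ᵐ x ∂(volume.restrict
        {x : EuclideanSpace ℝ (Fin 2) | x 0 ∈ Set.Ioo (0:ℝ) 1 ∧ x 1 ∈ Set.Ioo (0:ℝ) 1}),
      Dmat y x = (1 : Matrix (Fin 2) (Fin 2) ℝ)) ∨
    (∀ᵐ x ∂(volume.restrict
        {x : EuclideanSpace ℝ (Fin 2) | x 0 ∈ Set.Ioo (0:ℝ) 1 ∧ x 1 ∈ Set.Ioo (0:ℝ) 1}),
      Dmat y x ∈ ({0, (2:ℝ) • Matrix.vecMulVec ![(0:ℝ), 1] ![(0:ℝ), 1]} :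
        Set (Matrix (Fin 2) (Fin 2) ℝ))) := by
  set Ω := {x : ℝ² | x 0 ∈ Ioo (0:ℝ) 1 ∧ x 1 ∈ Ioo (0:ℝ) 1}
  obtain ⟨K, hy⟩ := hy
  have hΩ : IsOpen Ω := (isOpen_Ioo.prod isOpen_Ioo).preimage finTwoEquivProd.continuous
  have hgood : ∀ᵐ x ∂volume.restrict Ω,
      DifferentiableAt ℝ y x ∧ (Dmat y x = 1 ∨ Dmat y x ∈ K₂) := by
    filter_upwards [hy.ae_differentiableWithinAt hΩ.measurableSet, hgrad,
      ae_restrict_mem hΩ.measurableSet] with x hd hD hx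
    exact ⟨hd.differentiableAt (hΩ.mem_nhds hx), hD⟩
  have half : (1 / 2 : ℝ) ∈ Ioo 0 1 := by norm_num
  set F : ℝ → ℝ := fun s => y (finTwoEquivProd.symm (s, 1 / 2)) 0
  set G : ℝ → ℝ := fun t => y (finTwoEquivProd.symm (1 / 2, t)) 1
  have hF : ∀ x ∈ Ω, y x 0 = F (x 0) := fun x hx =>
    hy.apply_zero_eq_of_ae_Dmat_zero_one isOpen_Ioo ordConnected_Ioo
      (hgood.mono fun x hx => ⟨hx.1, (offDiag_eq_zero_of_eq_one_or_mem hx.2).1⟩) hx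
      ⟨by simpa using hx.1, by simpa using half⟩ (by simp)
  have hG : ∀ x ∈ Ω, y x 1 = G (x 1) := fun x hx =>
    hy.apply_one_eq_of_ae_Dmat_one_zero ordConnected_Ioo isOpen_Ioo
      (hgood.mono fun x hx => ⟨hx.1, (offDiag_eq_zero_of_eq_one_or_mem hx.2).2⟩) hx
      ⟨by simpa using half, by simpa using hx.2⟩ (by simp)
  have hiff := hΩ.ae_Dmat_eq_one_iff_hasDerivAt hF hG hgood
  rcases ae_or_ae_not_of_ae_iff_coords (by simp) (hiff.mono fun x hx => hx.1.symm.trans hx.2)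
    with hq | hq
  · left
    filter_upwards [hiff, hq] with x hx hqx using hx.2.2 hqx
  · right
    filter_upwards [hiff, hq, hgood] with x hx hqx hD using
      hD.2.resolve_left fun h => hqx (hx.2.1 h)
end
end

section
/- Let Q = (0,1)² ⊆ ℝ², let 1 denote the 2×2 identity matrix, and set F = ½·1 + ½·e₂⊗e₂ (i.e. F = diag(1/2, 1)). For every δ > 0 there exists a Lipschitz map y : closure(Q) → ℝ² with y(x) = Fx for all x ∈ ∂Q, such that ℒ²({x ∈ Q : |Dy(x) − 1| < δ}) > 1/2 − δ and ℒ²({x ∈ Q : min(|Dy(x)|, |Dy(x) − 2 e₂⊗e₂|) < δ}) > 1/2 − δ. (This double-laminate construction shows that the pair of sets {1} and {0, 2 e₂⊗e₂} is not incompatible: a gradient Young measure ν = ½δ_{1} + ¼δ_{0} + ¼δ_{2e₂⊗e₂} is supported nontrivially on both sets.) -/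
open MeasureTheory Matrix Pointwise ENNReal

noncomputable section

open Incompat NNReal Bornology

/-!
`F = diag(1/2, 1)` is the average of `1` and `diag(0, 1)`, which differ by the rank-one matrix
`e₁⊗e₁`, and `diag(0, 1)` is the average of `0` and `2e₂⊗e₂`. Both laminates are realised with the
sawtooth `t ↦ |t - round t|`. The first component `x 0 / 2 + sawtooth (n x 0 + 1/4) / (2n)` has
`x 0`-slope `1` and `0` on alternating strips of width `1/(2n)`. The second component
`x 1 + sawtooth (N x 1) / N` has `x 1`-slope `2` and `0` on alternating layers of width `1/(2N)`;
it is cut off (by a minimum) on the strips where the first component has slope `1`, so there the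
gradient is `1`, and elsewhere it is `0` or `2e₂⊗e₂`. Taking both perturbations in a minimum with
the distance to `∂Q` gives the boundary values `Fx` and keeps the map Lipschitz, and it changes
the gradient only within `1/(4n)` of `∂Q`. With `N = 4n²` each of the two phases then fills
measure `(1/2 - 1/(2n)) (1 - 1/(2n))`.
-/

open Filter Set Topology

local notation "ℝ²" => EuclideanSpace ℝ (Fin 2)

def sawtooth (t : ℝ) : ℝ := |t - round t|

lemma sawtooth_nonneg (t : ℝ) : 0 ≤ sawtooth t := abs_nonneg _

lemma sawtooth_le_half (t : ℝ) : sawtooth t ≤ 1 / 2 := abs_sub_round t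

lemma sawtooth_le_abs_sub (t : ℝ) (k : ℤ) : sawtooth t ≤ |t - k| := round_le t k

lemma lipschitzWith_sawtooth : LipschitzWith 1 sawtooth :=
  LipschitzWith.of_le_add fun s t =>
    calc sawtooth s ≤ |s - round t| := sawtooth_le_abs_sub s (round t)
      _ ≤ |s - t| + |t - round t| := abs_sub_le s t _
      _ = sawtooth t + dist s t := by rw [Real.dist_eq, sawtooth, add_comm]

@[fun_prop]
lemma continuous_sawtooth : Continuous sawtooth := lipschitzWith_sawtooth.continuous

lemma sawtooth_eq_abs_sub {t : ℝ} {k : ℤ} (h : t ∈ Ico (k - 1 / 2 : ℝ) (k + 1 / 2)) :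
    sawtooth t = |t - k| := by
  rw [sawtooth, round_eq, (Int.floor_eq_iff (z := k)).mpr ⟨by linarith [h.1], by linarith [h.2]⟩]

lemma min_sub_le_sawtooth {t : ℝ} (k : ℤ) : min (t - k) (k + 1 - t) ≤ sawtooth t := by
  rcases le_or_gt (round t) k with h | h
  · have : (round t : ℝ) ≤ k := by exact_mod_cast h
    exact (min_le_left _ _).trans ((by linarith : t - k ≤ t - round t).trans (le_abs_self _))
  · have : (k : ℝ) + 1 ≤ round t := by exact_mod_cast h
    exact (min_le_right _ _).trans
      ((by linarith : (k : ℝ) + 1 - t ≤ -(t - round t)).trans (neg_le_abs _))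

lemma sawtooth_eventuallyEq_sub {t : ℝ} {k : ℤ} (h : t ∈ Ioo (k : ℝ) (k + 1 / 2)) :
    sawtooth =ᶠ[𝓝 t] fun s => s - k := by
  filter_upwards [Ioo_mem_nhds h.1 h.2] with s hs
  rw [sawtooth_eq_abs_sub ⟨by linarith [hs.1], hs.2⟩, abs_of_pos (by linarith [hs.1])]

lemma sawtooth_eventuallyEq_intCast_sub {t : ℝ} {k : ℤ} (h : t ∈ Ioo (k - 1 / 2 : ℝ) k) :
    sawtooth =ᶠ[𝓝 t] fun s => k - s := by
  filter_upwards [Ioo_mem_nhds h.1 h.2] with s hs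
  rw [sawtooth_eq_abs_sub ⟨hs.1.le, by linarith [hs.2]⟩, abs_of_neg (by linarith [hs.2]), neg_sub]

lemma sawtooth_eventuallyEq_affine {t : ℝ} (h : ∀ m : ℤ, 2 * t ≠ m) :
    ∃ s c : ℝ, (s = 1 ∨ s = -1) ∧ sawtooth =ᶠ[𝓝 t] fun r => s * r + c := by
  set k := round t
  have hk : t ∈ Ioo (k - 1 / 2 : ℝ) (k + 1 / 2) := by
    have h1 : |t - k| ≤ 1 / 2 := abs_sub_round t
    have h2 : 2 * t ≠ ((2 * k - 1 : ℤ) : ℝ) := h _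
    have h3 : 2 * t ≠ ((2 * k + 1 : ℤ) : ℝ) := h _
    push_cast at h2 h3
    rw [abs_le] at h1
    exact ⟨lt_of_le_of_ne (by linarith) (fun e => h2 (by linarith)),
      lt_of_le_of_ne (by linarith) (fun e => h3 (by linarith))⟩
  have hne : t ≠ k := fun e => h (2 * k) (by push_cast; rw [e])
  rcases hne.lt_or_gt with hlt | hgt
  · exact ⟨-1, k, Or.inr rfl, by
      simpa [neg_one_mul, neg_add_eq_sub] using sawtooth_eventuallyEq_intCast_sub ⟨hk.1, hlt⟩⟩
  · exact ⟨1, -k, Or.inl rfl, by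
      simpa [one_mul, ← sub_eq_add_neg] using sawtooth_eventuallyEq_sub ⟨hgt, hk.2⟩⟩

lemma LipschitzWith.const_mul {α : Type*} [PseudoEMetricSpace α] {f : α → ℝ} {K : ℝ≥0}
    (hf : LipschitzWith K f) (c : ℝ) : LipschitzWith (‖c‖₊ * K) fun x => c * f x :=
  (lipschitzWith_smul c).comp hf

lemma LipschitzWith.div_const {α : Type*} [PseudoEMetricSpace α] {f : α → ℝ} {K : ℝ≥0}
    (hf : LipschitzWith K f) (c : ℝ) : LipschitzWith (‖c⁻¹‖₊ * K) fun x => f x / c := by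
  simpa only [div_eq_inv_mul] using hf.const_mul c⁻¹

lemma lipschitzWith_coord (i : Fin 2) : LipschitzWith 1 fun x : ℝ² => x i :=
  mul_one (1 : ℝ≥0) ▸ (LipschitzWith.eval i).comp (PiLp.lipschitzWith_ofLp 2 fun _ : Fin 2 => ℝ)

lemma exists_lipschitzWith_toLp_pair {u v : ℝ² → ℝ} {Ku Kv : ℝ≥0} (hu : LipschitzWith Ku u)
    (hv : LipschitzWith Kv v) : ∃ K : ℝ≥0, LipschitzWith K fun x => !₂[u x, v x] := by
  have hpair : LipschitzWith (max Ku Kv) fun x => ![u x, v x] :=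
    LipschitzWith.of_dist_le_mul fun a b => (dist_pi_le_iff (by positivity)).2 <| by
      simp only [Fin.forall_fin_two, Matrix.cons_val_zero, Matrix.cons_val_one, NNReal.coe_max]
      exact ⟨(hu.dist_le_mul a b).trans (by gcongr; exact le_max_left _ _),
        (hv.dist_le_mul a b).trans (by gcongr; exact le_max_right _ _)⟩
  exact ⟨_, (PiLp.lipschitzWith_toLp 2 _).comp hpair⟩

lemma eventuallyEq_min_left {α : Type*} [TopologicalSpace α] {f g : α → ℝ} {x : α}
    (hf : ContinuousAt f x) (hg : ContinuousAt g x) (h : f x < g x) :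
    (fun z => min (f z) (g z)) =ᶠ[𝓝 x] f := by
  filter_upwards [hf.eventually_lt hg h] with z hz using min_eq_left hz.le

lemma Filter.EventuallyEq.comp_coord {f g : ℝ → ℝ} {x : ℝ²} (i : Fin 2) (h : f =ᶠ[𝓝 (x i)] g) :
    (fun z : ℝ² => f (z i)) =ᶠ[𝓝 x] fun z => g (z i) :=
  h.comp_tendsto ((lipschitzWith_coord i).continuous.tendsto x)

lemma toCLM_apply {m n : ℕ} (A : Matrix (Fin m) (Fin n) ℝ) (x : EuclideanSpace ℝ (Fin n))
    (i : Fin m) : toCLM A x i = ∑ j, A i j * x j := by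
  simp [toCLM, Matrix.mulVec, dotProduct]

lemma Dmat_eq_of_eventuallyEq {m n : ℕ} {y : EuclideanSpace ℝ (Fin n) → EuclideanSpace ℝ (Fin m)}
    {x : EuclideanSpace ℝ (Fin n)} {A : Matrix (Fin m) (Fin n) ℝ} {c : EuclideanSpace ℝ (Fin m)}
    (h : y =ᶠ[𝓝 x] fun z => toCLM A z + c) : Dmat y x = A := by
  ext i j
  rw [Dmat, of_apply, h.fderiv_eq, fderiv_add_const, ContinuousLinearMap.fderiv, toCLM_apply]
  simp

lemma Dmat_eq_diagonal {u v : ℝ² → ℝ} {x : ℝ²} {a b c d : ℝ}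
    (hu : u =ᶠ[𝓝 x] fun z => a * z 0 + c) (hv : v =ᶠ[𝓝 x] fun z => b * z 1 + d) :
    Dmat (fun z => !₂[u z, v z]) x = diagonal ![a, b] := by
  refine Dmat_eq_of_eventuallyEq (c := !₂[c, d]) ?_
  filter_upwards [hu, hv] with z hu hv
  ext i
  fin_cases i <;> simp [toCLM_apply, Fin.sum_univ_two, hu, hv]

lemma volume_setOf_mem_and_mem (I J : Set ℝ) :
    volume {x : ℝ² | x 0 ∈ I ∧ x 1 ∈ J} = volume I * volume J := by
  have hset : {x : ℝ² | x 0 ∈ I ∧ x 1 ∈ J}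
      = (MeasurableEquiv.toLp 2 (Fin 2 → ℝ)).symm ⁻¹' univ.pi ![I, J] := by
    ext x
    simp [Fin.forall_fin_two]
  rw [hset, (EuclideanSpace.volume_preserving_symm_measurableEquiv_toLp _).measure_preimage_equiv,
    volume_pi_pi, Fin.prod_univ_two]
  rfl

def strips (n : ℕ) (s : Finset ℕ) (a b : ℝ) : Set ℝ :=
  {t | ∃ k ∈ s, (n : ℝ) * t ∈ Ioo (k + a) (k + b)}

lemma volume_strips {n : ℕ} (hn : n ≠ 0) (s : Finset ℕ) {a b : ℝ}
    (hba : b ≤ a + 1) : volume (strips n s a b) = ENNReal.ofReal (s.card * (b - a) / n) := by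
  have hn' : (n : ℝ) ≠ 0 := Nat.cast_ne_zero.mpr hn
  have hdisj : (s : Set ℕ).PairwiseDisjoint fun k : ℕ => Ioo ((k : ℝ) + a) (k + b) := by
    refine ((pairwise_disjoint_on _).mpr fun p q hpq => ?_).set_pairwise _
    have : (p : ℝ) + 1 ≤ q := by exact_mod_cast hpq
    exact Set.disjoint_left.mpr fun t ht ht' => by linarith [ht.2, ht'.1]
  have hpre : strips n s a b = (fun t => (n : ℝ) * t) ⁻¹' ⋃ k ∈ s, Ioo ((k : ℝ) + a) (k + b) := by
    ext t
    simp only [strips, mem_preimage, mem_iUnion, exists_prop, mem_ofPred_eq]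
  rw [hpre, Real.volume_preimage_mul_left hn', measure_biUnion_finset hdisj
    fun _ _ => measurableSet_Ioo]
  simp only [Real.volume_Ioo, add_sub_add_left_eq_sub, Finset.sum_const, nsmul_eq_mul]
  rw [← ENNReal.ofReal_natCast, ← ENNReal.ofReal_mul (by positivity),
    ← ENNReal.ofReal_mul (by positivity), abs_inv, Nat.abs_cast]
  congr 1
  field_simp

lemma mem_Ioo_of_mul_mem_Ioo {n : ℕ} (hn : n ≠ 0) {t α β : ℝ} (h : n * t ∈ Ioo α β)
    (hα : 1 / 4 ≤ α) (hβ : β ≤ n - 1 / 4) : t ∈ Ioo (1 / (4 * n) : ℝ) (1 - 1 / (4 * n)) := by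
  have hn' : (0 : ℝ) < n := by positivity
  constructor
  · rw [div_lt_iff₀ (by positivity)]
    linarith [h.1]
  · rw [show (1 : ℝ) - 1 / (4 * n) = (n - 1 / 4) / n by field_simp, lt_div_iff₀ hn']
    linarith [h.2]

def boundaryDist (x : ℝ²) : ℝ := min (min (x 0) (1 - x 0)) (min (x 1) (1 - x 1))

@[fun_prop]
lemma continuous_boundaryDist : Continuous boundaryDist := by
  unfold boundaryDist
  fun_prop

lemma boundaryDist_pos_iff {x : ℝ²} : 0 < boundaryDist x ↔ x 0 ∈ Ioo 0 1 ∧ x 1 ∈ Ioo 0 1 := by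
  simp [boundaryDist, sub_pos]

lemma boundaryDist_eq_zero_of_mem_frontier {x : ℝ²}
    (hx : x ∈ frontier {x : ℝ² | x 0 ∈ Ioo 0 1 ∧ x 1 ∈ Ioo 0 1}) : boundaryDist x = 0 := by
  rw [← Set.ext fun _ => boundaryDist_pos_iff] at hx
  exact (frontier_lt_subset_eq continuous_const continuous_boundaryDist hx).symm

lemma lt_boundaryDist {r : ℝ} {x : ℝ²} (h₀ : x 0 ∈ Ioo r (1 - r)) (h₁ : x 1 ∈ Ioo r (1 - r)) :
    r < boundaryDist x :=
  lt_min (lt_min h₀.1 (by linarith [h₀.2])) (lt_min h₁.1 (by linarith [h₁.2]))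

def coarseProfile (n : ℕ) (t : ℝ) : ℝ := t / 2 + sawtooth (n * t + 1 / 4) / (2 * n)

def fineProfile (N : ℕ) (t : ℝ) : ℝ := t + sawtooth (N * t) / N

def laminateFst (n : ℕ) (x : ℝ²) : ℝ :=
  x 0 / 2 + min (sawtooth (n * x 0 + 1 / 4) / (2 * n)) (boundaryDist x)

def laminateSnd (n N : ℕ) (x : ℝ²) : ℝ :=
  x 1 + min (min (sawtooth (N * x 1) / N) (max 0 (sawtooth (n * x 0) - 1 / 4) / n))
    (boundaryDist x)

def doubleLaminate (n N : ℕ) (x : ℝ²) : ℝ² := !₂[laminateFst n x, laminateSnd n N x]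

lemma exists_lipschitzWith_doubleLaminate (n N : ℕ) :
    ∃ K : ℝ≥0, LipschitzWith K (doubleLaminate n N) := by
  have h₀ := lipschitzWith_coord 0
  have h₁ := lipschitzWith_coord 1
  have hd : LipschitzWith _ boundaryDist :=
    (h₀.min ((LipschitzWith.const 1).sub h₀)).min (h₁.min ((LipschitzWith.const 1).sub h₁))
  have hfst : LipschitzWith _ (laminateFst n) :=
    (h₀.div_const 2).add ((lipschitzWith_sawtooth.comp
      ((h₀.const_mul n).add (LipschitzWith.const _))).div_const _ |>.min hd)
  have hcut : LipschitzWith _ fun x : ℝ² => max 0 (sawtooth (n * x 0) - 1 / 4) / n :=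
    ((LipschitzWith.const 0).max ((lipschitzWith_sawtooth.comp (h₀.const_mul n)).sub
      (LipschitzWith.const _))).div_const _
  have hsnd : LipschitzWith _ (laminateSnd n N) :=
    h₁.add (((lipschitzWith_sawtooth.comp (h₁.const_mul N)).div_const _ |>.min hcut).min hd)
  exact exists_lipschitzWith_toLp_pair hfst hsnd

lemma doubleLaminate_of_mem_frontier (n N : ℕ) {x : ℝ²}
    (hx : x ∈ frontier {x : ℝ² | x 0 ∈ Ioo 0 1 ∧ x 1 ∈ Ioo 0 1}) :
    doubleLaminate n N x = toCLM ((1 / 2 : ℝ) • (1 : Matrix (Fin 2) (Fin 2) ℝ) +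
      (1 / 2 : ℝ) • vecMulVec ![(0 : ℝ), 1] ![(0 : ℝ), 1]) x := by
  have hd := boundaryDist_eq_zero_of_mem_frontier hx
  have hu : min (sawtooth (n * x 0 + 1 / 4) / (2 * n)) (boundaryDist x) = 0 := by
    rw [hd]
    exact min_eq_right (div_nonneg (sawtooth_nonneg _) (by positivity))
  have hv : min (min (sawtooth (N * x 1) / N) (max 0 (sawtooth (n * x 0) - 1 / 4) / n))
      (boundaryDist x) = 0 := by
    rw [hd]
    exact min_eq_right (le_min (div_nonneg (sawtooth_nonneg _) (by positivity)) (by positivity))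
  rw [doubleLaminate, laminateFst, laminateSnd, hu, hv]
  ext i
  fin_cases i <;> simp [toCLM_apply, Fin.sum_univ_two, vecMulVec] <;> ring

lemma laminateFst_eventuallyEq {n : ℕ} (hn : n ≠ 0) {x : ℝ²}
    (hd : 1 / (4 * n) < boundaryDist x) :
    laminateFst n =ᶠ[𝓝 x] fun z => coarseProfile n (z 0) := by
  have hsaw : sawtooth (n * x 0 + 1 / 4) / (2 * n) < boundaryDist x := by
    refine lt_of_le_of_lt ?_ hd
    rw [div_le_div_iff₀ (by positivity) (by positivity)]
    nlinarith [sawtooth_le_half (n * x 0 + 1 / 4)]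
  filter_upwards [eventuallyEq_min_left (f := fun z => sawtooth (n * z 0 + 1 / 4) / (2 * n))
    (g := boundaryDist) (by fun_prop) (by fun_prop) hsaw] with z hz
  rw [laminateFst, hz, coarseProfile]

lemma coarseProfile_eventuallyEq_slope_one {n : ℕ} (hn : n ≠ 0) {t : ℝ} {k : ℤ}
    (h : n * t ∈ Ioo (k - 1 / 4 : ℝ) (k + 1 / 4)) :
    coarseProfile n =ᶠ[𝓝 t] fun s => 1 * s + (1 / 4 - k) / (2 * n) := by
  have hsaw := (sawtooth_eventuallyEq_sub (k := k) (t := n * t + 1 / 4)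
    ⟨by linarith [h.1], by linarith [h.2]⟩).comp_tendsto
    ((by fun_prop : Continuous fun s : ℝ => n * s + 1 / 4).tendsto t)
  filter_upwards [hsaw] with s hs
  simp only [Function.comp_apply] at hs
  rw [coarseProfile, hs]
  field_simp
  ring

lemma coarseProfile_eventuallyEq_slope_zero {n : ℕ} (hn : n ≠ 0) {t : ℝ} {k : ℤ}
    (h : n * t ∈ Ioo (k + 1 / 4 : ℝ) (k + 3 / 4)) :
    coarseProfile n =ᶠ[𝓝 t] fun s => 0 * s + (k + 3 / 4) / (2 * n) := by
  have hsaw := (sawtooth_eventuallyEq_intCast_sub (k := k + 1) (t := n * t + 1 / 4)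
    ⟨by push_cast; linarith [h.1], by push_cast; linarith [h.2]⟩).comp_tendsto
    ((by fun_prop : Continuous fun s : ℝ => n * s + 1 / 4).tendsto t)
  filter_upwards [hsaw] with s hs
  simp only [Function.comp_apply] at hs
  rw [coarseProfile, hs]
  push_cast
  field_simp
  ring

lemma laminateSnd_eventuallyEq_of_sawtooth_lt {n N : ℕ} {x : ℝ²}
    (hsaw : sawtooth (n * x 0) < 1 / 4) (hd : 0 < boundaryDist x) :
    laminateSnd n N =ᶠ[𝓝 x] fun z => 1 * z 1 + 0 := by
  have hlt : ∀ᶠ z in 𝓝 x, sawtooth (n * z 0) < 1 / 4 :=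
    (by fun_prop : Continuous fun z : ℝ² => sawtooth (n * z 0)).continuousAt.eventually_lt
      continuousAt_const hsaw
  have hpos : ∀ᶠ z in 𝓝 x, 0 < boundaryDist z :=
    continuousAt_const.eventually_lt continuous_boundaryDist.continuousAt hd
  filter_upwards [hlt, hpos] with z hz hz'
  rw [laminateSnd, max_eq_left (by linarith), zero_div,
    min_eq_right (div_nonneg (sawtooth_nonneg _) (Nat.cast_nonneg N)), min_eq_left hz'.le]
  ring

lemma laminateSnd_eventuallyEq_of_lt_sawtooth {n N : ℕ} (hn : n ≠ 0) (hN : N ≠ 0) {x : ℝ²}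
    (hcut : 1 / 4 + n / N < sawtooth (n * x 0)) (hd : 1 / (4 * n) < boundaryDist x) :
    laminateSnd n N =ᶠ[𝓝 x] fun z => fineProfile N (z 1) := by
  have hfine : sawtooth (N * x 1) / N < max 0 (sawtooth (n * x 0) - 1 / 4) / n := by
    calc sawtooth (N * x 1) / N ≤ (1 / 2) / N := by gcongr; exact sawtooth_le_half _
      _ < 1 / N := by gcongr; norm_num
      _ = (n / N) / n := by field_simp
      _ < (sawtooth (n * x 0) - 1 / 4) / n := by gcongr; linarith
      _ ≤ _ := by gcongr; exact le_max_right _ _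
  have hcutd : max 0 (sawtooth (n * x 0) - 1 / 4) / n ≤ 1 / (4 * n) := by
    rw [← div_div]
    gcongr
    exact max_le (by norm_num) (by linarith [sawtooth_le_half (n * x 0)])
  have h₁ := eventuallyEq_min_left (f := fun z : ℝ² => sawtooth (N * z 1) / N)
    (g := fun z => max 0 (sawtooth (n * z 0) - 1 / 4) / n) (by fun_prop) (by fun_prop) hfine
  have h₂ := eventuallyEq_min_left
    (f := fun z => min (sawtooth (N * z 1) / N) (max 0 (sawtooth (n * z 0) - 1 / 4) / n))
    (g := boundaryDist) (by fun_prop) (by fun_prop)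
    ((min_le_left _ _).trans_lt ((hfine.trans_le hcutd).trans hd))
  filter_upwards [h₁, h₂] with z hz₁ hz₂
  rw [laminateSnd, hz₂, hz₁, fineProfile]

lemma fineProfile_eventuallyEq {N : ℕ} (hN : N ≠ 0) {t : ℝ} (h : ∀ m : ℤ, 2 * (N * t) ≠ m) :
    ∃ b c : ℝ, (b = 2 ∨ b = 0) ∧ fineProfile N =ᶠ[𝓝 t] fun s => b * s + c := by
  obtain ⟨σ, c, hσ, hsaw⟩ := sawtooth_eventuallyEq_affine h
  refine ⟨1 + σ, c / N, by rcases hσ with rfl | rfl <;> norm_num, ?_⟩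
  filter_upwards [hsaw.comp_tendsto (continuous_const_mul (N : ℝ)).continuousAt] with s hs
  simp only [Function.comp_apply] at hs
  rw [fineProfile, hs]
  field_simp
  ring

lemma Dmat_doubleLaminate_eq_one {n N : ℕ} (hn : n ≠ 0) {x : ℝ²} {k : ℤ}
    (hk : n * x 0 ∈ Ioo (k - 1 / 4 : ℝ) (k + 1 / 4)) (hd : 1 / (4 * n) < boundaryDist x) :
    Dmat (doubleLaminate n N) x = 1 := by
  have hsaw : sawtooth (n * x 0) < 1 / 4 := (sawtooth_le_abs_sub _ k).trans_lt
    (abs_sub_lt_iff.2 ⟨by linarith [hk.2], by linarith [hk.1]⟩)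
  have hu := (laminateFst_eventuallyEq hn hd).trans
    ((coarseProfile_eventuallyEq_slope_one hn hk).comp_coord 0)
  have hv := laminateSnd_eventuallyEq_of_sawtooth_lt (N := N) hsaw
    ((by positivity : (0 : ℝ) < 1 / (4 * n)).trans hd)
  calc Dmat (doubleLaminate n N) x = diagonal ![1, 1] := Dmat_eq_diagonal hu hv
    _ = 1 := by ext i j; fin_cases i <;> fin_cases j <;> simp

lemma Dmat_doubleLaminate_eq_zero_or {n N : ℕ} (hn : n ≠ 0) (hN : N ≠ 0) {x : ℝ²} {k : ℤ}
    (hk : n * x 0 ∈ Ioo (k + (1 / 4 + n / N) : ℝ) (k + (3 / 4 - n / N)))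
    (hd : 1 / (4 * n) < boundaryDist x) (hx : ∀ m : ℤ, 2 * (N * x 1) ≠ m) :
    Dmat (doubleLaminate n N) x = 0 ∨
      Dmat (doubleLaminate n N) x = (2 : ℝ) • vecMulVec ![(0 : ℝ), 1] ![(0 : ℝ), 1] := by
  have hnN : (0 : ℝ) ≤ n / N := by positivity
  have hcut : 1 / 4 + n / N < sawtooth (n * x 0) :=
    (lt_min (by linarith [hk.1]) (by linarith [hk.2])).trans_le (min_sub_le_sawtooth k)
  have hu := (laminateFst_eventuallyEq hn hd).trans
    ((coarseProfile_eventuallyEq_slope_zero hn (k := k)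
      ⟨by linarith [hk.1], by linarith [hk.2]⟩).comp_coord 0)
  obtain ⟨b, c, hb, hfine⟩ := fineProfile_eventuallyEq hN hx
  have hv := (laminateSnd_eventuallyEq_of_lt_sawtooth hn hN hcut hd).trans (hfine.comp_coord 1)
  have hD : Dmat (doubleLaminate n N) x = diagonal ![0, b] := Dmat_eq_diagonal hu hv
  rcases hb with rfl | rfl
  · right
    rw [hD]
    ext i j
    fin_cases i <;> fin_cases j <;> simp [vecMulVec]
  · left
    rw [hD]
    ext i j
    fin_cases i <;> fin_cases j <;> simp

lemma subset_setOf_Dmat_doubleLaminate_eq_one {n N : ℕ} (hn : n ≠ 0) :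
    {x : ℝ² | x 0 ∈ strips n (Finset.Ioo 0 n) (-(1 / 4)) (1 / 4) ∧
        x 1 ∈ Ioo (1 / (4 * n) : ℝ) (1 - 1 / (4 * n))} ⊆
      {x | (x 0 ∈ Ioo 0 1 ∧ x 1 ∈ Ioo 0 1) ∧ Dmat (doubleLaminate n N) x = 1} := by
  rintro x ⟨⟨k, hk, hx₀⟩, hx₁⟩
  obtain ⟨hk₁, hkn⟩ := Finset.mem_Ioo.mp hk
  have hk' : (1 : ℝ) ≤ k ∧ (k : ℝ) + 1 ≤ n := ⟨by exact_mod_cast hk₁, by exact_mod_cast hkn⟩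
  have hd := lt_boundaryDist
    (mem_Ioo_of_mul_mem_Ioo hn hx₀ (by linarith) (by linarith)) hx₁
  refine ⟨boundaryDist_pos_iff.mp ((by positivity : (0 : ℝ) < 1 / (4 * n)).trans hd),
    Dmat_doubleLaminate_eq_one hn (k := k) ?_ hd⟩
  simpa [sub_eq_add_neg] using hx₀

lemma subset_setOf_Dmat_doubleLaminate_eq_zero_or {n N : ℕ} (hn : n ≠ 0) (hN : N ≠ 0) :
    {x : ℝ² | x 0 ∈ strips n (Finset.range n) (1 / 4 + n / N) (3 / 4 - n / N) ∧
        x 1 ∈ Ioo (1 / (4 * n) : ℝ) (1 - 1 / (4 * n)) \ range fun m : ℤ => (m : ℝ) / (2 * N)} ⊆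
      {x | (x 0 ∈ Ioo 0 1 ∧ x 1 ∈ Ioo 0 1) ∧ (Dmat (doubleLaminate n N) x = 0 ∨
        Dmat (doubleLaminate n N) x = (2 : ℝ) • vecMulVec ![(0 : ℝ), 1] ![(0 : ℝ), 1])} := by
  rintro x ⟨⟨k, hk, hx₀⟩, hx₁, hlattice⟩
  have hkn : (k : ℝ) + 1 ≤ n := by exact_mod_cast Finset.mem_range.mp hk
  have hnN : (0 : ℝ) ≤ n / N := by positivity
  have hd := lt_boundaryDist
    (mem_Ioo_of_mul_mem_Ioo hn hx₀ (by linarith [k.cast_nonneg (α := ℝ)]) (by linarith)) hx₁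
  refine ⟨boundaryDist_pos_iff.mp ((by positivity : (0 : ℝ) < 1 / (4 * n)).trans hd),
    Dmat_doubleLaminate_eq_zero_or hn hN (k := k) (by simpa using hx₀) hd ?_⟩
  intro m hm
  refine hlattice ⟨m, ?_⟩
  show (m : ℝ) / (2 * N) = x 1
  rw [← hm]
  field_simp

lemma ofReal_le_volume_setOf_Dmat_doubleLaminate_eq_one {n : ℕ} (hn : n ≠ 0) (N : ℕ) :
    ENNReal.ofReal ((1 / 2 - 1 / (2 * n)) * (1 - 1 / (2 * n))) ≤
      volume {x : ℝ² | (x 0 ∈ Ioo 0 1 ∧ x 1 ∈ Ioo 0 1) ∧ Dmat (doubleLaminate n N) x = 1} := by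
  refine le_of_eq_of_le ?_ (measure_mono (subset_setOf_Dmat_doubleLaminate_eq_one hn))
  rw [volume_setOf_mem_and_mem, volume_strips hn _ (by norm_num), Real.volume_Ioo,
    ← ENNReal.ofReal_mul (by positivity), Nat.card_Ioo, Nat.sub_zero,
    Nat.cast_sub (Nat.one_le_iff_ne_zero.mpr hn)]
  congr 1
  field_simp
  ring

lemma ofReal_le_volume_setOf_Dmat_doubleLaminate_eq_zero_or {n N : ℕ} (hn : n ≠ 0) (hN : N ≠ 0) :
    ENNReal.ofReal ((1 / 2 - 2 * n / N) * (1 - 1 / (2 * n))) ≤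
      volume {x : ℝ² | (x 0 ∈ Ioo 0 1 ∧ x 1 ∈ Ioo 0 1) ∧ (Dmat (doubleLaminate n N) x = 0 ∨
        Dmat (doubleLaminate n N) x = (2 : ℝ) • vecMulVec ![(0 : ℝ), 1] ![(0 : ℝ), 1])} := by
  refine le_of_eq_of_le ?_ (measure_mono (subset_setOf_Dmat_doubleLaminate_eq_zero_or hn hN))
  have hJ : 0 ≤ 1 - 1 / (4 * n) - 1 / (4 * (n : ℝ)) := by
    have : 1 / (4 * (n : ℝ)) ≤ 1 / 4 := by
      gcongr
      linarith [(by exact_mod_cast Nat.one_le_iff_ne_zero.mpr hn : (1 : ℝ) ≤ n)]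
    linarith
  have hnN : (0 : ℝ) ≤ n / N := by positivity
  rw [volume_setOf_mem_and_mem, volume_strips hn _ (by linarith),
    measure_sdiff_null ((countable_range _).measure_zero _), Real.volume_Ioo,
    ← ENNReal.ofReal_mul' hJ, Finset.card_range]
  congr 1
  field_simp
  ring

lemma ofReal_half_sub_lt {n : ℕ} (hn : 2 ≤ n) {δ : ℝ} (hδ : 1 / n < δ) :
    ENNReal.ofReal (1 / 2 - δ) < ENNReal.ofReal ((1 / 2 - 1 / (2 * n)) * (1 - 1 / (2 * n))) := by
  have hh : 0 < 1 / (2 * (n : ℝ)) := by positivity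
  have hn' : (2 : ℝ) ≤ n := by exact_mod_cast hn
  have hh' : 1 / (2 * (n : ℝ)) ≤ 1 / 4 := by
    gcongr
    linarith
  have hδ' : 1 / (n : ℝ) = 2 * (1 / (2 * n)) := by field_simp
  rw [ENNReal.ofReal_lt_ofReal_iff (by nlinarith)]
  -- with `h = 1/(2n)`: `(1/2 - h) (1 - h) = 1/2 - 3h/2 + h² > 1/2 - 2h = 1/2 - 1/n`
  nlinarith

/-- double laminate. With boundary values `Fx`, `F = ½·1 + ½·e₂⊗e₂`, there are
Lipschitz maps whose gradient is within `δ` of `1` on measure `> 1/2 − δ` and within `δ` of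
`{0, 2e₂⊗e₂}` on measure `> 1/2 − δ`. -/
theorem double_laminate_construction (δ : ℝ) (hδ : 0 < δ) :
    ∃ y : EuclideanSpace ℝ (Fin 2) → EuclideanSpace ℝ (Fin 2),
      (∃ K : ℝ≥0, LipschitzOnWith K y
        (closure {x : EuclideanSpace ℝ (Fin 2) | x 0 ∈ Set.Ioo (0:ℝ) 1 ∧ x 1 ∈ Set.Ioo (0:ℝ) 1})) ∧
      (∀ x ∈ frontier {x : EuclideanSpace ℝ (Fin 2) | x 0 ∈ Set.Ioo (0:ℝ) 1 ∧ x 1 ∈ Set.Ioo (0:ℝ) 1},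
        y x = toCLM ((1/2 : ℝ) • (1 : Matrix (Fin 2) (Fin 2) ℝ) +
          (1/2 : ℝ) • Matrix.vecMulVec ![(0:ℝ), 1] ![(0:ℝ), 1]) x) ∧
      ENNReal.ofReal (1/2 - δ) < volume {x ∈
        {x : EuclideanSpace ℝ (Fin 2) | x 0 ∈ Set.Ioo (0:ℝ) 1 ∧ x 1 ∈ Set.Ioo (0:ℝ) 1} |
        frobNorm (Dmat y x - 1) < δ} ∧
      ENNReal.ofReal (1/2 - δ) < volume {x ∈
        {x : EuclideanSpace ℝ (Fin 2) | x 0 ∈ Set.Ioo (0:ℝ) 1 ∧ x 1 ∈ Set.Ioo (0:ℝ) 1} |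
        min (frobNorm (Dmat y x))
          (frobNorm (Dmat y x - (2:ℝ) • Matrix.vecMulVec ![(0:ℝ), 1] ![(0:ℝ), 1])) < δ} := by
  obtain ⟨n, hn⟩ := exists_nat_gt (max 2 (1 / δ))
  have hn₂ : 2 ≤ n := by exact_mod_cast (le_max_left _ _).trans hn.le
  have hδn : 1 / (n : ℝ) < δ := (div_lt_iff₀' (by positivity)).mpr
    ((div_lt_iff₀ hδ).mp ((le_max_right _ _).trans_lt hn))
  have hn₀ : n ≠ 0 := by omega
  have hscale : 2 * (n : ℝ) / ((4 * n ^ 2 : ℕ) : ℝ) = 1 / (2 * n) := by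
    push_cast
    field_simp
    ring
  refine ⟨doubleLaminate n (4 * n ^ 2), ?_, fun x hx => doubleLaminate_of_mem_frontier n _ hx,
    ?_, ?_⟩
  · obtain ⟨K, hK⟩ := exists_lipschitzWith_doubleLaminate n (4 * n ^ 2)
    exact ⟨K, hK.lipschitzOnWith⟩
  · refine (ofReal_half_sub_lt hn₂ hδn).trans_le
      ((ofReal_le_volume_setOf_Dmat_doubleLaminate_eq_one hn₀ (4 * n ^ 2)).trans
        (measure_mono fun x hx => ⟨hx.1, ?_⟩))
    simpa [hx.2, frobNorm] using hδ
  · have hB := ofReal_le_volume_setOf_Dmat_doubleLaminate_eq_zero_or hn₀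
      (N := 4 * n ^ 2) (by positivity)
    rw [hscale] at hB
    refine (ofReal_half_sub_lt hn₂ hδn).trans_le (hB.trans (measure_mono fun x hx => ⟨hx.1, ?_⟩))
    rcases hx.2 with h | h <;> simpa [h, frobNorm] using hδ
end
end

section
/- Let p > 1, and in M^{2×2} set A₁ = 0 and A₂ = 1 (the identity), so that rank(A₂ − A₁) = 2. For every γ > 0 there exist a bounded domain Ω ⊆ ℝ² (a 'rooms and passages' domain) and a Lipschitz map y : Ω → ℝ² such that, with K₁ = {A₁}, K₂ = {A₂} and ε = 0: ℒ²(Ω_{1,0}(y)) > 0, ℒ²(Ω_{2,0}(y)) > 0, and ∫_{T₀(y)} (1 + |Dy(x)|^p) dx < γ · min( ℒ²(Ω_{1,0}(y)), ℒ²(Ω_{2,0}(y)) ). (Thus the transition layer estimate fails for general bounded domains, i.e. some connectivity hypothesis on Ω is necessary.) -/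
/-!
Take two rooms `(-2,-1) × (-1,1)` and `(1,2) × (-1,1)` joined by a passage `(-2,2) × (-δ,δ)`,
and `y x = φ(x₀) x` with `φ` a smooth step from `0` (for `x₀ ≤ -1`) to `1` (for `x₀ ≥ 1`).
Then `Dy = 0` on the left room and `Dy = 1` on the right one, so both phases have area at
least `2`, while the transition layer lies in `[-1,1] × (-δ,δ)`, of area `4δ`. The integrand is
bounded independently of `δ` by its maximum on a fixed compact ball, so a thin enough passage
makes the transition energy smaller than any fixed multiple of the phase areas.
-/

open MeasureTheory Matrix Pointwise ENNReal

noncomputable section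

open Incompat NNReal Bornology

namespace Incompat

variable {m n : ℕ}

theorem mem_Nbhd_of_mem {K : Set (Matrix (Fin m) (Fin n) ℝ)} {A : Matrix (Fin m) (Fin n) ℝ}
    {ε : ℝ} (hA : A ∈ K) (hε : 0 ≤ ε) : A ∈ Nbhd K ε :=
  ⟨A, hA, by simpa [frobNorm] using hε⟩

theorem frobNorm_nonneg (A : Matrix (Fin m) (Fin n) ℝ) : 0 ≤ frobNorm A :=
  Real.sqrt_nonneg _

theorem continuous_frobNorm : Continuous (frobNorm : Matrix (Fin m) (Fin n) ℝ → ℝ) := by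
  unfold frobNorm
  fun_prop

theorem Dmat_congr {y z : EuclideanSpace ℝ (Fin n) → EuclideanSpace ℝ (Fin m)}
    {x : EuclideanSpace ℝ (Fin n)} (h : y =ᶠ[nhds x] z) : Dmat y x = Dmat z x := by
  simp only [Dmat, h.fderiv_eq]

theorem Dmat_const (c : EuclideanSpace ℝ (Fin m)) (x : EuclideanSpace ℝ (Fin n)) :
    Dmat (fun _ => c) x = 0 := by
  ext i j
  simp [Dmat]

theorem Dmat_id (x : EuclideanSpace ℝ (Fin n)) : Dmat id x = 1 := by
  ext i j
  simp [Dmat, Matrix.one_apply]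

theorem _root_.ContDiff.continuous_Dmat
    {y : EuclideanSpace ℝ (Fin n) → EuclideanSpace ℝ (Fin m)} (hy : ContDiff ℝ 1 y) :
    Continuous (Dmat y) :=
  continuous_matrix fun i _ =>
    (EuclideanSpace.proj i).continuous.comp
      ((hy.continuous_fderiv one_ne_zero).clm_apply continuous_const)

end Incompat

namespace RoomsAndPassages

open Set

local notation "E" => EuclideanSpace ℝ (Fin 2)

def rect (s t : Set ℝ) : Set E := {x | x 0 ∈ s ∧ x 1 ∈ t}

theorem volume_rect (s t : Set ℝ) : volume (rect s t) = volume s * volume t := by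
  have h : rect s t = (MeasurableEquiv.toLp 2 (Fin 2 → ℝ)).symm ⁻¹' univ.pi ![s, t] := by
    ext x
    simp [rect, Fin.forall_fin_two]
  rw [h, (EuclideanSpace.volume_preserving_symm_measurableEquiv_toLp (Fin 2)).measure_preimage_equiv,
    volume_pi_pi, Fin.prod_univ_two]
  rfl

theorem isOpen_rect {s t : Set ℝ} (hs : IsOpen s) (ht : IsOpen t) : IsOpen (rect s t) :=
  (hs.preimage (EuclideanSpace.proj 0).continuous).inter
    (ht.preimage (EuclideanSpace.proj 1).continuous)

theorem convex_rect {s t : Set ℝ} (hs : Convex ℝ s) (ht : Convex ℝ t) : Convex ℝ (rect s t) :=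
  fun _ hx _ hy _ _ ha hb hab => ⟨hs hx.1 hy.1 ha hb hab, ht hx.2 hy.2 ha hb hab⟩

theorem isConnected_rect_Ioo {a b c d : ℝ} (hab : a < b) (hcd : c < d) :
    IsConnected (rect (Ioo a b) (Ioo c d)) := by
  have hmid : !₂[(a + b) / 2, (c + d) / 2] ∈ rect (Ioo a b) (Ioo c d) :=
    show (a + b) / 2 ∈ Ioo a b ∧ (c + d) / 2 ∈ Ioo c d from
      ⟨⟨by linarith, by linarith⟩, ⟨by linarith, by linarith⟩⟩
  exact ⟨⟨_, hmid⟩, (convex_rect (convex_Ioo a b) (convex_Ioo c d)).isPreconnected⟩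

theorem norm_le_of_abs_le {x : E} {a b : ℝ} (h₀ : |x 0| ≤ a) (h₁ : |x 1| ≤ b) :
    ‖x‖ ≤ a + b := by
  rw [EuclideanSpace.norm_eq, Fin.sum_univ_two, Real.norm_eq_abs, Real.norm_eq_abs, sq_abs,
    sq_abs, Real.sqrt_le_iff]
  constructor <;> nlinarith [abs_nonneg (x 0), abs_nonneg (x 1), sq_abs (x 0), sq_abs (x 1)]

def step (t : ℝ) : ℝ := Real.smoothTransition ((t + 1) / 2)

theorem contDiff_step (n : ℕ∞) : ContDiff ℝ n step :=
  Real.smoothTransition.contDiff.comp ((contDiff_id.add contDiff_const).div_const 2)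

theorem step_of_le {t : ℝ} (ht : t ≤ -1) : step t = 0 :=
  Real.smoothTransition.zero_of_nonpos (by linarith)

theorem step_of_ge {t : ℝ} (ht : 1 ≤ t) : step t = 1 :=
  Real.smoothTransition.one_of_one_le (by linarith)

def stepMap (x : E) : E := step (x 0) • x

theorem contDiff_stepMap (n : ℕ∞) : ContDiff ℝ n stepMap :=
  ((contDiff_step n).comp (EuclideanSpace.proj (0 : Fin 2) : E →L[ℝ] ℝ).contDiff).smul contDiff_id

theorem Dmat_stepMap_eq_zero {x : E} (hx : x 0 < -1) : Dmat stepMap x = 0 := by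
  have hloc : stepMap =ᶠ[nhds x] fun _ => 0 := by
    filter_upwards [(isOpen_lt (EuclideanSpace.proj 0).continuous continuous_const).mem_nhds hx]
      with z (hz : z 0 < -1)
    rw [stepMap, step_of_le hz.le, zero_smul]
  rw [Dmat_congr hloc, Dmat_const]

theorem Dmat_stepMap_eq_one {x : E} (hx : 1 < x 0) : Dmat stepMap x = 1 := by
  have hloc : stepMap =ᶠ[nhds x] id := by
    filter_upwards [(isOpen_lt continuous_const (EuclideanSpace.proj 0).continuous).mem_nhds hx]
      with z (hz : 1 < z 0)
    rw [stepMap, step_of_ge hz.le, one_smul, id]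
  rw [Dmat_congr hloc, Dmat_id]

def leftRoom : Set E := rect (Ioo (-2) (-1)) (Ioo (-1) 1)

def rightRoom : Set E := rect (Ioo 1 2) (Ioo (-1) 1)

def passage (δ : ℝ) : Set E := rect (Ioo (-2) 2) (Ioo (-δ) δ)

def domain (δ : ℝ) : Set E := passage δ ∪ leftRoom ∪ rightRoom

theorem isOpen_domain (δ : ℝ) : IsOpen (domain δ) :=
  ((isOpen_rect isOpen_Ioo isOpen_Ioo).union (isOpen_rect isOpen_Ioo isOpen_Ioo)).union
    (isOpen_rect isOpen_Ioo isOpen_Ioo)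

theorem isConnected_domain {δ : ℝ} (hδ : 0 < δ) : IsConnected (domain δ) := by
  have hleft : !₂[-3 / 2, 0] ∈ passage δ ∩ leftRoom :=
    show _ ∧ _ from ⟨⟨⟨by norm_num, by norm_num⟩, ⟨neg_lt_zero.2 hδ, hδ⟩⟩,
      ⟨⟨by norm_num, by norm_num⟩, ⟨by norm_num, by norm_num⟩⟩⟩
  have hright : !₂[3 / 2, 0] ∈ (passage δ ∪ leftRoom) ∩ rightRoom :=
    show _ ∧ _ from ⟨Or.inl ⟨⟨by norm_num, by norm_num⟩, ⟨neg_lt_zero.2 hδ, hδ⟩⟩,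
      ⟨⟨by norm_num, by norm_num⟩, ⟨by norm_num, by norm_num⟩⟩⟩
  exact ((isConnected_rect_Ioo (by norm_num) (by linarith)).union ⟨_, hleft⟩
    (isConnected_rect_Ioo (by norm_num) (by norm_num))).union ⟨_, hright⟩
    (isConnected_rect_Ioo (by norm_num) (by norm_num))

theorem domain_subset_closedBall {δ : ℝ} (hδ : δ ≤ 1) : domain δ ⊆ Metric.closedBall 0 3 := by
  intro x hx
  have hcoord : |x 0| ≤ 2 ∧ |x 1| ≤ 1 := by
    rcases hx with (⟨h₀, h₁⟩ | ⟨h₀, h₁⟩) | ⟨h₀, h₁⟩ <;>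
      exact ⟨abs_le.2 ⟨by linarith [h₀.1], by linarith [h₀.2]⟩,
        abs_le.2 ⟨by linarith [h₁.1], by linarith [h₁.2]⟩⟩
  rw [mem_closedBall_zero_iff]
  linarith [norm_le_of_abs_le hcoord.1 hcoord.2]

theorem volume_domain_ne_top {δ : ℝ} (hδ : δ ≤ 1) : volume (domain δ) ≠ ⊤ :=
  (measure_mono (domain_subset_closedBall hδ)).trans_lt measure_closedBall_lt_top |>.ne

theorem leftRoom_subset_phaseSet (δ : ℝ) :
    leftRoom ⊆ phaseSet (domain δ) stepMap {0} 0 := fun x hx =>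
  ⟨Or.inl (Or.inr hx), by rw [Dmat_stepMap_eq_zero hx.1.2]; exact mem_Nbhd_of_mem rfl le_rfl⟩

theorem rightRoom_subset_phaseSet (δ : ℝ) :
    rightRoom ⊆ phaseSet (domain δ) stepMap {1} 0 := fun x hx =>
  ⟨Or.inr hx, by rw [Dmat_stepMap_eq_one hx.1.1]; exact mem_Nbhd_of_mem rfl le_rfl⟩

theorem transLayer_domain_subset (δ : ℝ) :
    transLayer (domain δ) stepMap {0} {1} 0 ⊆ rect (Icc (-1) 1) (Ioo (-δ) δ) := by
  rintro x ⟨hx, hDx⟩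
  have h₀ : -1 ≤ x 0 := not_lt.1 fun h =>
    hDx (Or.inl (by rw [Dmat_stepMap_eq_zero h]; exact mem_Nbhd_of_mem rfl le_rfl))
  have h₁ : x 0 ≤ 1 := not_lt.1 fun h =>
    hDx (Or.inr (by rw [Dmat_stepMap_eq_one h]; exact mem_Nbhd_of_mem rfl le_rfl))
  rcases hx with (hx | hx) | hx
  · exact ⟨⟨h₀, h₁⟩, hx.2⟩
  · exact absurd hx.1.2 h₀.not_gt
  · exact absurd hx.1.1 h₁.not_gt

theorem volume_real_leftRoom : volume.real leftRoom = 2 := by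
  rw [Measure.real, leftRoom, volume_rect, Real.volume_Ioo, Real.volume_Ioo,
    ← ENNReal.ofReal_mul (by norm_num), ENNReal.toReal_ofReal (by norm_num)]
  norm_num

theorem volume_real_rightRoom : volume.real rightRoom = 2 := by
  rw [Measure.real, rightRoom, volume_rect, Real.volume_Ioo, Real.volume_Ioo,
    ← ENNReal.ofReal_mul (by norm_num), ENNReal.toReal_ofReal (by norm_num)]
  norm_num

theorem volume_real_rect_Icc_Ioo {δ : ℝ} (hδ : 0 ≤ δ) :
    volume.real (rect (Icc (-1) 1) (Ioo (-δ) δ)) = 4 * δ := by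
  rw [Measure.real, volume_rect, Real.volume_Icc, Real.volume_Ioo,
    ← ENNReal.ofReal_mul (by norm_num), ENNReal.toReal_ofReal (by linarith)]
  ring

theorem two_le_volume_real_phaseSet_zero {δ : ℝ} (hδ : δ ≤ 1) :
    2 ≤ volume.real (phaseSet (domain δ) stepMap {0} 0) :=
  volume_real_leftRoom ▸ measureReal_mono (leftRoom_subset_phaseSet δ)
    (measure_ne_top_of_subset (fun _ hx => hx.1) (volume_domain_ne_top hδ))

theorem two_le_volume_real_phaseSet_one {δ : ℝ} (hδ : δ ≤ 1) :
    2 ≤ volume.real (phaseSet (domain δ) stepMap {1} 0) :=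
  volume_real_rightRoom ▸ measureReal_mono (rightRoom_subset_phaseSet δ)
    (measure_ne_top_of_subset (fun _ hx => hx.1) (volume_domain_ne_top hδ))

theorem setIntegral_transLayer_domain_le {f : E → ℝ} {B δ : ℝ} (hδ₀ : 0 ≤ δ) (hδ₁ : δ ≤ 1)
    (hB : ∀ x ∈ Metric.closedBall 0 3, ‖f x‖ ≤ B) :
    ∫ x in transLayer (domain δ) stepMap {0} {1} 0, f x ≤ 4 * δ * B := by
  set T := transLayer (domain δ) stepMap {0} {1} 0
  have hT : volume T ≠ ⊤ := measure_ne_top_of_subset (fun _ hx => hx.1) (volume_domain_ne_top hδ₁)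
  have hB₀ : 0 ≤ B := (norm_nonneg _).trans (hB 0 (Metric.mem_closedBall_self zero_le_three))
  calc ∫ x in T, f x ≤ ‖∫ x in T, f x‖ := Real.le_norm_self _
    _ ≤ B * volume.real T := norm_setIntegral_le_of_norm_le_const hT.lt_top
        fun x hx => hB x (domain_subset_closedBall hδ₁ hx.1)
    _ ≤ B * volume.real (rect (Icc (-1) 1) (Ioo (-δ) δ)) := by
        gcongr
        · rw [volume_rect, Real.volume_Icc, Real.volume_Ioo]
          exact ENNReal.mul_ne_top ENNReal.ofReal_ne_top ENNReal.ofReal_ne_top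
        · exact transLayer_domain_subset δ
    _ = 4 * δ * B := by rw [volume_real_rect_Icc_Ioo hδ₀]; ring

theorem exists_bound_integrand {p : ℝ} (hp : 0 ≤ p) :
    ∃ B, 1 ≤ B ∧ ∀ x ∈ Metric.closedBall (0 : E) 3, ‖1 + frobNorm (Dmat stepMap x) ^ p‖ ≤ B := by
  have hf : Continuous fun x => 1 + frobNorm (Dmat stepMap x) ^ p :=
    continuous_const.add ((Real.continuous_rpow_const hp).comp
      (continuous_frobNorm.comp (contDiff_stepMap 1).continuous_Dmat))
  obtain ⟨B, hB⟩ := (isCompact_closedBall 0 3).exists_bound_of_continuousOn hf.continuousOn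
  refine ⟨B, ?_, hB⟩
  have h := hB 0 (Metric.mem_closedBall_self zero_le_three)
  have hpow := Real.rpow_nonneg (frobNorm_nonneg (Dmat stepMap 0)) p
  rw [Real.norm_of_nonneg (by positivity)] at h
  linarith

end RoomsAndPassages

open RoomsAndPassages in
/-- rooms and passages. For `A₁ = 0`, `A₂ = 1` and any `γ > 0` there is a
bounded domain `Ω ⊆ ℝ²` and a Lipschitz map `y` on it violating the transition layer estimate
with constant `γ`. -/
theorem rooms_and_passages_counterexample (p : ℝ) (hp : 1 < p) (γ : ℝ) (hγ : 0 < γ) :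
    ∃ Ω : Set (EuclideanSpace ℝ (Fin 2)),
      IsOpen Ω ∧ IsConnected Ω ∧ IsBounded Ω ∧
      ∃ y : EuclideanSpace ℝ (Fin 2) → EuclideanSpace ℝ (Fin 2), ∃ K : ℝ≥0,
        LipschitzOnWith K y Ω ∧
        0 < volume (phaseSet Ω y {(0 : Matrix (Fin 2) (Fin 2) ℝ)} 0) ∧
        0 < volume (phaseSet Ω y {(1 : Matrix (Fin 2) (Fin 2) ℝ)} 0) ∧
        (∫ x in transLayer Ω y {(0 : Matrix (Fin 2) (Fin 2) ℝ)} {(1 : Matrix (Fin 2) (Fin 2) ℝ)} 0,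
            (1 + frobNorm (Dmat y x) ^ p)) <
          γ * min (volume (phaseSet Ω y {(0 : Matrix (Fin 2) (Fin 2) ℝ)} 0)).toReal
                  (volume (phaseSet Ω y {(1 : Matrix (Fin 2) (Fin 2) ℝ)} 0)).toReal := by
  obtain ⟨B, hB₁, hB⟩ := exists_bound_integrand (zero_lt_one.trans hp).le
  set δ := min 1 (γ / (4 * B))
  have hδ₀ : 0 < δ := lt_min one_pos (by positivity)
  have hδ₁ : δ ≤ 1 := min_le_left _ _
  have hδγ : 4 * δ * B ≤ γ := by
    have hδ_le : δ ≤ γ / (4 * B) := min_le_right _ _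
    calc 4 * δ * B ≤ 4 * (γ / (4 * B)) * B := by gcongr
      _ = γ := by field_simp
  obtain ⟨K, hK⟩ := (contDiff_stepMap 1).contDiffOn.exists_lipschitzOnWith one_ne_zero
    (convex_closedBall 0 3) (isCompact_closedBall 0 3)
  have h₀ := two_le_volume_real_phaseSet_zero hδ₁
  have h₁ := two_le_volume_real_phaseSet_one hδ₁
  refine ⟨domain δ, isOpen_domain δ, isConnected_domain hδ₀,
    Metric.isBounded_closedBall.subset (domain_subset_closedBall hδ₁), stepMap, K,
    hK.mono (domain_subset_closedBall hδ₁), (ENNReal.toReal_pos_iff.1 (two_pos.trans_le h₀)).1,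
    (ENNReal.toReal_pos_iff.1 (two_pos.trans_le h₁)).1, ?_⟩
  calc _ ≤ 4 * δ * B := setIntegral_transLayer_domain_le hδ₀.le hδ₁ hB
    _ < γ * 2 := by linarith
    _ ≤ _ := by gcongr; exact le_min h₀ h₁
end
end

section
/- Let m, n ≥ 1, let K₁, K₂ be disjoint compact subsets of M^{m×n}, and let ε > 0 be such that N_ε(K₁) ∩ N_ε(K₂) = ∅. Suppose W : [0,1] × M^{m×n} → ℝ ∪ {+∞}, written (τ, A) ↦ W_τ(A), satisfies: (H1)′ W is jointly lower semicontinuous on [0,1] × M^{m×n}, and for each fixed A the map τ ↦ W_τ(A) is continuous; (H2)′ W₀(A) ≥ 0 for all A, and W₀⁻¹(0) = K₁ ∪ K₂; (H3)′ min over N_ε(K₁) of W_τ equals 0 for every τ ∈ [0,1]; (H4)′ W_τ(A) ≥ c₀ + c₁|A|^p for all τ ∈ [0,1] and all A, where c₀ ∈ ℝ, c₁ > 0, p > 1. Then there exist α > 0, τ₀ ∈ (0,1], and a function δ : (0, τ₀) → (0, ∞) with δ(τ) → 0 as τ → 0+, such that for every τ ∈ (0, τ₀): (H3) min over N_{ε/2}(K₁)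 of W_τ equals 0 and W_τ(A) ≥ 0 for all A ∈ N_ε(K₁); (H4) W_τ(A) ≥ −δ(τ) for all A ∈ N_ε(K₂); (H5) W_τ(A) ≥ α for all A ∉ N_ε(K₁) ∪ N_ε(K₂). -/
open MeasureTheory Matrix Pointwise ENNReal

noncomputable section

open Incompat NNReal Bornology

/-!
Joint lower semicontinuity of `(τ, A) ↦ W_τ(A)` lets a strict lower bound `b < W₀` on a compact
set persist, uniformly on that set, for all small `τ` (a tube-lemma argument). Applied where
`W₀ > 0`, namely on `N_ε(K₁) \ N_{ε/2}(K₁)` and on a large ball minus `N_ε(K₁) ∪ N_ε(K₂)` (the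
coercivity (H4)′ handles the rest), this gives (H3) and (H5). Applied on `N_ε(K₂)`, where
`W₀ ≥ 0`, with `b = -η` for every `η > 0`, it shows that the deficit `δ(τ)` of (H4) tends to `0`.
-/

open Filter Topology Metric Set

section Semicontinuity

variable {T X β : Type*} [TopologicalSpace T] [TopologicalSpace X] {s : Set T} {t₀ : T}
  {K : Set X}

theorem LowerSemicontinuousOn.eventually_forall_lt_of_isCompact [Preorder β] {W : T → X → β}
    (hW : LowerSemicontinuousOn (fun q : T × X => W q.1 q.2) (s ×ˢ univ)) (ht₀ : t₀ ∈ s)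
    (hK : IsCompact K) {b : β} (hb : ∀ x ∈ K, b < W t₀ x) :
    ∀ᶠ t in 𝓝[s] t₀, ∀ x ∈ K, b < W t x := by
  have key : ∀ᶠ t in 𝓝 t₀, ∀ x ∈ K, t ∈ s → b < W t x :=
    hK.eventually_forall_of_forall_eventually fun x hx =>
      (eventually_nhdsWithin_iff.1 (hW (t₀, x) ⟨ht₀, trivial⟩ b (hb x hx))).mono
        fun z hz hzs => hz ⟨hzs, trivial⟩
  rw [eventually_nhdsWithin_iff]
  exact key.mono fun t ht hts x hx => ht x hx hts

theorem LowerSemicontinuousOn.lowerSemicontinuous_slice [Preorder β] {W : T → X → β}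
    (hW : LowerSemicontinuousOn (fun q : T × X => W q.1 q.2) (s ×ˢ univ)) (ht₀ : t₀ ∈ s) :
    LowerSemicontinuous (W t₀) :=
  lowerSemicontinuousOn_univ_iff.1 <|
    hW.comp (g := fun x => (t₀, x)) (by fun_prop) fun _ _ => ⟨ht₀, trivial⟩

variable {W : T → X → EReal}
  (hW : LowerSemicontinuousOn (fun q : T × X => W q.1 q.2) (s ×ˢ univ)) (ht₀ : t₀ ∈ s)
include hW ht₀

theorem LowerSemicontinuousOn.exists_pos_eventually_le_of_isCompact (hK : IsCompact K)
    (hpos : ∀ x ∈ K, 0 < W t₀ x) :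
    ∃ α : ℝ, 0 < α ∧ ∀ᶠ t in 𝓝[s] t₀, ∀ x ∈ K, (α : EReal) ≤ W t x := by
  obtain ⟨α, hα, hαW⟩ : ∃ α : ℝ, 0 < α ∧ ∀ x ∈ K, (α : EReal) < W t₀ x := by
    rcases K.eq_empty_or_nonempty with rfl | hne
    · exact ⟨1, one_pos, by simp⟩
    obtain ⟨x₀, hx₀, hmin⟩ :=
      (hW.lowerSemicontinuous_slice ht₀).lowerSemicontinuousOn K |>.exists_isMinOn hne hK
    obtain ⟨α, hα, hαx₀⟩ := EReal.exists_between_coe_real (hpos x₀ hx₀)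
    exact ⟨α, EReal.coe_pos.1 hα, fun x hx => hαx₀.trans_le (hmin hx)⟩
  exact ⟨α, hα, (hW.eventually_forall_lt_of_isCompact ht₀ hK hαW).mono
    fun t ht x hx => (ht x hx).le⟩

theorem LowerSemicontinuousOn.exists_pos_eventually_le_of_notMem {U : Set X} (hU : IsOpen U)
    (hpos : ∀ x ∉ U, 0 < W t₀ x) {c : ℝ} (hc : 0 < c)
    (hcoer : ∀ᶠ x in cocompact X, ∀ t ∈ s, (c : EReal) ≤ W t x) :
    ∃ α : ℝ, 0 < α ∧ ∀ᶠ t in 𝓝[s] t₀, ∀ x ∉ U, (α : EReal) ≤ W t x := by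
  obtain ⟨C, hC, hCcoer⟩ := mem_cocompact.1 hcoer
  obtain ⟨α, hα, hαC⟩ :=
    hW.exists_pos_eventually_le_of_isCompact ht₀ (hC.diff hU) fun x hx => hpos x hx.2
  refine ⟨min α c, lt_min hα hc, (hαC.and self_mem_nhdsWithin).mono
    fun t ⟨ht, hts⟩ x hxU => ?_⟩
  by_cases hxC : x ∈ C
  · exact (EReal.coe_le_coe_iff.2 (min_le_left _ _)).trans (ht x ⟨hxC, hxU⟩)
  · exact (EReal.coe_le_coe_iff.2 (min_le_right _ _)).trans (hCcoer hxC t hts)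

theorem LowerSemicontinuousOn.eventually_neg_le_iInf (hK : IsCompact K)
    (hnonneg : ∀ x ∈ K, 0 ≤ W t₀ x) {η : ℝ} (hη : 0 < η) :
    ∀ᶠ t in 𝓝[s] t₀, ((-η : ℝ) : EReal) ≤ ⨅ x ∈ K, W t x :=
  (hW.eventually_forall_lt_of_isCompact ht₀ hK fun x hx =>
    (EReal.coe_lt_coe_iff.2 (neg_neg_of_pos hη)).trans_le (hnonneg x hx)).mono
      fun _ h => le_iInf₂ fun x hx => (h x hx).le

end Semicontinuity

theorem LowerSemicontinuousOn.eventually_mem_thickening_of_nonpos {T X : Type*}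
    [TopologicalSpace T] [PseudoMetricSpace X] [ProperSpace X] {s : Set T} {t₀ : T}
    {W : T → X → EReal} (hW : LowerSemicontinuousOn (fun q : T × X => W q.1 q.2) (s ×ˢ univ))
    (ht₀ : t₀ ∈ s) {K : Set X} (hK : IsCompact K) {ε ε' : ℝ} (hε' : 0 < ε')
    (hpos : ∀ x ∈ cthickening ε K \ K, 0 < W t₀ x) :
    ∀ᶠ t in 𝓝[s] t₀, ∀ x ∈ cthickening ε K, W t x ≤ 0 → x ∈ thickening ε' K := by
  have hannulus := hW.eventually_forall_lt_of_isCompact ht₀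
    (hK.cthickening.diff isOpen_thickening)
    fun x hx => hpos x ⟨hx.1, fun hxK => hx.2 (self_subset_thickening hε' K hxK)⟩
  exact hannulus.mono fun t ht x hx hWx => by_contra fun hx' => (ht x ⟨hx, hx'⟩).not_ge hWx

theorem exists_pos_tendsto_zero_neg_le {f : ℝ → EReal}
    (hf : ∀ η : ℝ, 0 < η → ∀ᶠ τ in 𝓝[>] 0, ((-η : ℝ) : EReal) ≤ f τ) :
    ∃ δ : ℝ → ℝ, Tendsto δ (𝓝[>] 0) (𝓝 0) ∧
      ∀ τ, 0 < τ → f τ ≠ ⊥ → 0 < δ τ ∧ ((-δ τ : ℝ) : EReal) ≤ f τ := by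
  set g : ℝ → ℝ := fun τ => max 0 (-(f τ).toReal)
  have hg_nonneg : ∀ τ, 0 ≤ g τ := fun τ => le_max_left _ _
  have hg_le : ∀ τ, f τ ≠ ⊥ → ((-g τ : ℝ) : EReal) ≤ f τ := by
    intro τ hτ
    by_cases htop : f τ = ⊤
    · simp [htop]
    rw [← EReal.coe_toReal htop hτ, EReal.coe_le_coe_iff]
    linarith [le_max_right 0 (-(f τ).toReal)]
  have hg : Tendsto g (𝓝[>] 0) (𝓝 0) := by
    refine tendsto_order.2 ⟨fun a ha => Eventually.of_forall fun τ => ha.trans_le (hg_nonneg τ),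
      fun a ha => (hf (a / 2) (half_pos ha)).mono fun τ hτ => max_lt ha ?_⟩
    by_cases htop : f τ = ⊤
    · simpa [htop] using ha
    have := EReal.toReal_le_toReal hτ (EReal.coe_ne_bot _) htop
    rw [EReal.toReal_coe] at this
    linarith
  refine ⟨fun τ => τ + g τ, by simpa using (tendsto_nhdsWithin_of_tendsto_nhds tendsto_id).add hg,
    fun τ hτ hfτ => ⟨add_pos_of_pos_of_nonneg hτ (hg_nonneg τ), ?_⟩⟩
  exact (EReal.coe_le_coe_iff.2 (by linarith)).trans (hg_le τ hfτ)

theorem eventually_le_add_mul_norm_rpow {E : Type*} [NormedAddCommGroup E] [ProperSpace E]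
    (b c₀ : ℝ) {c₁ p : ℝ} (hc₁ : 0 < c₁) (hp : 0 < p) :
    ∀ᶠ x in cocompact E, b ≤ c₀ + c₁ * ‖x‖ ^ p :=
  (tendsto_atTop_add_const_left _ c₀ (((_root_.tendsto_rpow_atTop hp).const_mul_atTop hc₁).comp
    tendsto_norm_cocompact_atTop)).eventually_ge_atTop b

section Frobenius

attribute [local instance] Matrix.frobeniusNormedAddCommGroup

theorem frobNorm_eq_norm {m n : ℕ} (A : Matrix (Fin m) (Fin n) ℝ) : frobNorm A = ‖A‖ := by
  rw [frobNorm, Matrix.frobenius_norm_def, Real.sqrt_eq_rpow]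
  simp [Real.norm_eq_abs, sq_abs]

theorem nbhd_eq_cthickening {m n : ℕ} {K : Set (Matrix (Fin m) (Fin n) ℝ)} (hK : IsCompact K)
    {ε : ℝ} (hε : 0 ≤ ε) : Nbhd K ε = cthickening ε K := by
  rw [hK.cthickening_eq_biUnion_closedBall hε]
  ext A
  simp [Nbhd, frobNorm_eq_norm, dist_eq_norm]

end Frobenius

theorem perturbed_energy_hypotheses_general
    (m n : ℕ)
    (K₁ K₂ : Set (Matrix (Fin m) (Fin n) ℝ)) (hK₁ : IsCompact K₁) (hK₂ : IsCompact K₂)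
    (ε : ℝ) (hε : 0 < ε)
    (hNdisj : Nbhd K₁ ε ∩ Nbhd K₂ ε = ∅)
    (W : ℝ → Matrix (Fin m) (Fin n) ℝ → EReal)
    (c₀ c₁ p : ℝ) (hc₁ : 0 < c₁) (hp : 1 < p)
    (H1a : LowerSemicontinuousOn (fun q : ℝ × Matrix (Fin m) (Fin n) ℝ => W q.1 q.2)
      (Set.Icc (0:ℝ) 1 ×ˢ (Set.univ : Set (Matrix (Fin m) (Fin n) ℝ))))
    (H2a : ∀ A, 0 ≤ W 0 A) (H2b : {A | W 0 A = 0} = K₁ ∪ K₂)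
    (H3 : ∀ τ ∈ Set.Icc (0:ℝ) 1,
      (∃ A ∈ Nbhd K₁ ε, W τ A = 0) ∧ ∀ A ∈ Nbhd K₁ ε, 0 ≤ W τ A)
    (H4 : ∀ τ ∈ Set.Icc (0:ℝ) 1, ∀ A,
      ((c₀ + c₁ * frobNorm A ^ p : ℝ) : EReal) ≤ W τ A) :
    ∃ α > (0:ℝ), ∃ τ₀ : ℝ, 0 < τ₀ ∧ τ₀ ≤ 1 ∧
      ∃ δ : ℝ → ℝ,
        Filter.Tendsto δ (nhdsWithin 0 (Set.Ioi 0)) (nhds 0) ∧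
        ∀ τ : ℝ, 0 < τ → τ < τ₀ →
          0 < δ τ ∧
          (∃ A ∈ Nbhd K₁ (ε/2), W τ A = 0) ∧
          (∀ A ∈ Nbhd K₁ ε, 0 ≤ W τ A) ∧
          (∀ A ∈ Nbhd K₂ ε, ((-(δ τ) : ℝ) : EReal) ≤ W τ A) ∧
          (∀ A ∉ Nbhd K₁ ε ∪ Nbhd K₂ ε, ((α : ℝ) : EReal) ≤ W τ A) := by
  let := Matrix.frobeniusNormedAddCommGroup (m := Fin m) (n := Fin n) (α := ℝ)
  let := Matrix.frobeniusNormedSpace (m := Fin m) (n := Fin n) (R := ℝ) (α := ℝ)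
  have h0 : (0:ℝ) ∈ Icc (0:ℝ) 1 := left_mem_Icc.2 zero_le_one
  have hGT : 𝓝[>] (0:ℝ) ≤ 𝓝[Icc 0 1] 0 := nhdsWithin_le_of_mem (Icc_mem_nhdsGT one_pos)
  simp only [nbhd_eq_cthickening hK₁ hε.le, nbhd_eq_cthickening hK₂ hε.le,
    nbhd_eq_cthickening hK₁ (half_pos hε).le] at hNdisj H3 ⊢
  simp only [frobNorm_eq_norm] at H4
  have hW₀ : ∀ A ∉ K₁ ∪ K₂, 0 < W 0 A := fun A hA =>
    (H2a A).lt_of_ne fun h => hA (H2b ▸ h.symm)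
  obtain ⟨α, hα, hH5⟩ := H1a.exists_pos_eventually_le_of_notMem h0 isOpen_thickening
    (fun A hA => hW₀ A fun hK => hA (self_subset_thickening hε (K₁ ∪ K₂) hK)) one_pos
    ((eventually_le_add_mul_norm_rpow 1 c₀ hc₁ (by linarith)).mono fun A hA τ hτ =>
      (EReal.coe_le_coe_iff.2 hA).trans (H4 τ hτ A))
  have hH3 := H1a.eventually_mem_thickening_of_nonpos h0 hK₁ (half_pos hε) fun A hA => hW₀ A <| by
    rintro (hK | hK)
    exacts [hA.2 hK, hNdisj.subset ⟨hA.1, self_subset_cthickening _ hK⟩]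
  obtain ⟨δ, hδ, hδW⟩ := exists_pos_tendsto_zero_neg_le fun η hη =>
    hGT (H1a.eventually_neg_le_iInf h0 hK₂.cthickening (fun A _ => H2a A) hη)
  obtain ⟨τ₀, hτ₀, hτ₀sub⟩ := mem_nhdsGT_iff_exists_Ioo_subset.1
    (hGT ((hH5.and hH3).and self_mem_nhdsWithin))
  refine ⟨α, hα, min τ₀ 1, lt_min hτ₀ one_pos, min_le_right _ _, δ, hδ, fun τ hτ hτ₀' => ?_⟩
  obtain ⟨⟨hH5τ, hH3τ⟩, hτI⟩ := hτ₀sub ⟨hτ, hτ₀'.trans_le (min_le_left _ _)⟩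
  have hbdd : ((c₀ : ℝ) : EReal) ≤ ⨅ A ∈ cthickening ε K₂, W τ A := le_iInf₂ fun A _ =>
    (EReal.coe_le_coe_iff.2 (le_add_of_nonneg_right (by positivity))).trans (H4 τ hτI A)
  obtain ⟨hδpos, hδle⟩ := hδW τ hτ (ne_bot_of_le_ne_bot (EReal.coe_ne_bot c₀) hbdd)
  obtain ⟨⟨A₀, hA₀, hWA₀⟩, hnonneg⟩ := H3 τ hτI
  refine ⟨hδpos, ⟨A₀, thickening_subset_cthickening _ _ (hH3τ A₀ hA₀ hWA₀.le), hWA₀⟩, hnonneg,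
    fun A hA => hδle.trans (iInf₂_le A hA), fun A hA => hH5τ A fun h => hA ?_⟩
  rw [← cthickening_union]
  exact thickening_subset_cthickening _ _ h

/-- Proposition on perturbed energies: (H1)′–(H4)′ imply (H3)–(H5) with
`δ(τ) → 0`. -/
theorem perturbed_energy_hypotheses
    (m n : ℕ) (hm : 1 ≤ m) (hn : 1 ≤ n)
    (K₁ K₂ : Set (Matrix (Fin m) (Fin n) ℝ)) (hK₁ : IsCompact K₁) (hK₂ : IsCompact K₂)
    (hdisj : Disjoint K₁ K₂) (ε : ℝ) (hε : 0 < ε)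
    (hNdisj : Nbhd K₁ ε ∩ Nbhd K₂ ε = ∅)
    (W : ℝ → Matrix (Fin m) (Fin n) ℝ → EReal)
    (c₀ c₁ p : ℝ) (hc₁ : 0 < c₁) (hp : 1 < p)
    (H1a : LowerSemicontinuousOn (fun q : ℝ × Matrix (Fin m) (Fin n) ℝ => W q.1 q.2)
      (Set.Icc (0:ℝ) 1 ×ˢ (Set.univ : Set (Matrix (Fin m) (Fin n) ℝ))))
    (H1b : ∀ A, ContinuousOn (fun τ => W τ A) (Set.Icc (0:ℝ) 1))
    (H2a : ∀ A, 0 ≤ W 0 A) (H2b : {A | W 0 A = 0} = K₁ ∪ K₂)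
    (H3 : ∀ τ ∈ Set.Icc (0:ℝ) 1,
      (∃ A ∈ Nbhd K₁ ε, W τ A = 0) ∧ ∀ A ∈ Nbhd K₁ ε, 0 ≤ W τ A)
    (H4 : ∀ τ ∈ Set.Icc (0:ℝ) 1, ∀ A,
      ((c₀ + c₁ * frobNorm A ^ p : ℝ) : EReal) ≤ W τ A) :
    ∃ α > (0:ℝ), ∃ τ₀ : ℝ, 0 < τ₀ ∧ τ₀ ≤ 1 ∧
      ∃ δ : ℝ → ℝ,
        Filter.Tendsto δ (nhdsWithin 0 (Set.Ioi 0)) (nhds 0) ∧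
        ∀ τ : ℝ, 0 < τ → τ < τ₀ →
          0 < δ τ ∧
          (∃ A ∈ Nbhd K₁ (ε/2), W τ A = 0) ∧
          (∀ A ∈ Nbhd K₁ ε, 0 ≤ W τ A) ∧
          (∀ A ∈ Nbhd K₂ ε, ((-(δ τ) : ℝ) : EReal) ≤ W τ A) ∧
          (∀ A ∉ Nbhd K₁ ε ∪ Nbhd K₂ ε, ((α : ℝ) : EReal) ≤ W τ A) :=
  perturbed_energy_hypotheses_general m n K₁ K₂ hK₁ hK₂ ε hε hNdisj W c₀ c₁ p hc₁ hp H1a H2a H2b H3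
    H4
end
end
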